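/- arXiv:2104.13208 — 7 statements merged into one kernel-verified Lean document; each statement's English description precedes it below -/
import Mathlib

section
/- The softmax function with inverse temperature 1, i.e. the map z ↦ exp(z_1) / (∑_{k=1}^K exp(z_k)) from ℝ^K to ℝ, is Lipschitz continuous with Lipschitz constant 1/2 with respect to the supremum norm on ℝ^K. -/
open Real Finset

/-- The softmax function with inverse temperature 1, `z ↦ exp(z_1) / ∑_k exp(z_k)`,
is `1/2`-Lipschitz on `ℝ^K` with the supremum norm (the norm on `Fin K → ℝ`). -/
theorem softmax_lipschitz (K : ℕ) (hK : 0 < K) :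
    LipschitzWith (1 / 2)
      (fun z : Fin K → ℝ => Real.exp (z ⟨0, hK⟩) / ∑ k, Real.exp (z k)) := by
  set i0 : Fin K := ⟨0, hK⟩ with hi0
  have hne : Nonempty (Fin K) := Fin.pos_iff_nonempty.mp hK
  rw [← lipschitzOnWith_univ]
  apply Convex.lipschitzOnWith_of_nnnorm_hasFDerivWithin_le
    (f' := fun z => Real.exp (z i0) •
        ((-(((∑ k, Real.exp (z k)) ^ 2)⁻¹)) •
          (∑ k, Real.exp (z k) • (ContinuousLinearMap.proj k : (Fin K → ℝ) →L[ℝ] ℝ)))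
      + (∑ k, Real.exp (z k))⁻¹ •
          (Real.exp (z i0) • (ContinuousLinearMap.proj i0 : (Fin K → ℝ) →L[ℝ] ℝ)))
    ?_ ?_ convex_univ
  · intro z _
    have hS : 0 < ∑ k, Real.exp (z k) :=
      Finset.sum_pos (fun k _ => Real.exp_pos _) univ_nonempty
    have h1 : HasFDerivAt (fun z : Fin K → ℝ => Real.exp (z i0))
        (Real.exp (z i0) • (ContinuousLinearMap.proj i0 : (Fin K → ℝ) →L[ℝ] ℝ)) z :=
      ((ContinuousLinearMap.proj i0 : (Fin K → ℝ) →L[ℝ] ℝ).hasFDerivAt).exp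
    have h2 : HasFDerivAt (fun z : Fin K → ℝ => ∑ k, Real.exp (z k))
        (∑ k, Real.exp (z k) • (ContinuousLinearMap.proj k : (Fin K → ℝ) →L[ℝ] ℝ)) z := by
      apply HasFDerivAt.fun_sum
      intro k _
      exact ((ContinuousLinearMap.proj k : (Fin K → ℝ) →L[ℝ] ℝ).hasFDerivAt).exp
    have hinv : HasFDerivAt (fun z : Fin K → ℝ => (∑ k, Real.exp (z k))⁻¹)
        ((-(((∑ k, Real.exp (z k)) ^ 2)⁻¹)) •
          (∑ k, Real.exp (z k) • (ContinuousLinearMap.proj k : (Fin K → ℝ) →L[ℝ] ℝ))) z :=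
      (hasDerivAt_inv hS.ne').comp_hasFDerivAt z h2
    have hmul := h1.mul hinv
    have heq : (fun z : Fin K → ℝ => Real.exp (z i0) / ∑ k, Real.exp (z k))
        = fun z : Fin K → ℝ => Real.exp (z i0) * (∑ k, Real.exp (z k))⁻¹ := by
      funext w; rw [div_eq_mul_inv]
    rw [heq]
    exact hmul.hasFDerivWithinAt
  · intro z _
    rw [← NNReal.coe_le_coe, coe_nnnorm]
    apply ContinuousLinearMap.opNorm_le_bound _ (by norm_num)
    intro v
    set S : ℝ := ∑ k, Real.exp (z k) with hSdef
    have hS : 0 < S := Finset.sum_pos (fun k _ => Real.exp_pos _) univ_nonempty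
    have ha : 0 < Real.exp (z i0) := Real.exp_pos _
    have haS : Real.exp (z i0) ≤ S :=
      Finset.single_le_sum (fun k _ => (Real.exp_pos (z k)).le) (mem_univ i0)
    have key : (Real.exp (z i0) •
        ((-((S ^ 2)⁻¹)) •
          (∑ k, Real.exp (z k) • (ContinuousLinearMap.proj k : (Fin K → ℝ) →L[ℝ] ℝ)))
      + S⁻¹ • (Real.exp (z i0) • (ContinuousLinearMap.proj i0 : (Fin K → ℝ) →L[ℝ] ℝ))) v
        = (1 / S ^ 2) * (Real.exp (z i0) * ∑ k, Real.exp (z k) * (v i0 - v k)) := by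
      simp only [ContinuousLinearMap.add_apply, ContinuousLinearMap.smul_apply,
        ContinuousLinearMap.sum_apply, ContinuousLinearMap.proj_apply, smul_eq_mul]
      have hsplit : ∑ k, Real.exp (z k) * (v i0 - v k)
          = S * v i0 - ∑ k, Real.exp (z k) * v k := by
        rw [hSdef, Finset.sum_mul, ← Finset.sum_sub_distrib]
        exact Finset.sum_congr rfl fun k _ => by ring
      rw [hsplit]
      field_simp
      ring
    rw [key, Real.norm_eq_abs]
    have habs : |∑ k, Real.exp (z k) * (v i0 - v k)| ≤ 2 * (S - Real.exp (z i0)) * ‖v‖ := by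
      have h0 : ∑ k, Real.exp (z k) * (v i0 - v k)
          = ∑ k ∈ univ.erase i0, Real.exp (z k) * (v i0 - v k) := by
        rw [← Finset.add_sum_erase univ _ (mem_univ i0)]
        simp
      rw [h0]
      calc |∑ k ∈ univ.erase i0, Real.exp (z k) * (v i0 - v k)|
          ≤ ∑ k ∈ univ.erase i0, |Real.exp (z k) * (v i0 - v k)| :=
            Finset.abs_sum_le_sum_abs _ _
        _ ≤ ∑ k ∈ univ.erase i0, Real.exp (z k) * (2 * ‖v‖) := by
            apply Finset.sum_le_sum
            intro k _
            rw [abs_mul, abs_of_pos (Real.exp_pos _)]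
            apply mul_le_mul_of_nonneg_left _ (Real.exp_pos _).le
            have h1 : |v i0| ≤ ‖v‖ := by
              simpa [Real.norm_eq_abs] using norm_le_pi_norm v i0
            have h2 : |v k| ≤ ‖v‖ := by
              simpa [Real.norm_eq_abs] using norm_le_pi_norm v k
            calc |v i0 - v k| ≤ |v i0| + |v k| := abs_sub _ _
              _ ≤ 2 * ‖v‖ := by linarith
        _ = (S - Real.exp (z i0)) * (2 * ‖v‖) := by
            rw [← Finset.sum_mul, Finset.sum_erase_eq_sub (mem_univ i0)]
        _ = 2 * (S - Real.exp (z i0)) * ‖v‖ := by ring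
    have hvnn : (0:ℝ) ≤ ‖v‖ := norm_nonneg v
    have hstep : |1 / S ^ 2 * (Real.exp (z i0) * ∑ k, Real.exp (z k) * (v i0 - v k))|
        ≤ (1 / S ^ 2) * (Real.exp (z i0) * (2 * (S - Real.exp (z i0)) * ‖v‖)) := by
      rw [abs_mul, abs_mul, abs_of_pos (by positivity : (0:ℝ) < 1 / S ^ 2), abs_of_pos ha]
      exact mul_le_mul_of_nonneg_left (mul_le_mul_of_nonneg_left habs ha.le) (by positivity)
    refine hstep.trans ?_
    rw [NNReal.coe_div, NNReal.coe_one, NNReal.coe_ofNat]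
    rw [div_mul_eq_mul_div, one_mul, div_le_iff₀ (by positivity : (0:ℝ) < S ^ 2)]
    nlinarith [sq_nonneg (S - 2 * Real.exp (z i0)), hvnn,
      mul_nonneg hvnn (sq_nonneg (S - 2 * Real.exp (z i0)))]
end

section
/- The total variation norm of the signed measure μ associated to the indicator 𝟙_{[a,b⟩} equals 2^q, where q is the number of coordinates i such that b^i < 1; in particular ‖μ‖_TV ≤ 2^p. -/
open MeasureTheory Finset
open scoped ENNReal

lemma toSignedMeasure_finset_sum {α ι : Type*} [MeasurableSpace α] (s : Finset ι)
    (μ : ι → Measure α) [∀ i, IsFiniteMeasure (μ i)] :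
    (∑ i ∈ s, μ i).toSignedMeasure = ∑ i ∈ s, (μ i).toSignedMeasure := by
  classical
  induction s using Finset.induction with
  | empty => simp [Measure.toSignedMeasure_zero]
  | insert a s h ih =>
    simp only [Finset.sum_insert h, Measure.toSignedMeasure_add, ih]

/-- The signed measure `μ = ∑_{ε ∈ {0,1}^p} (−1)^{|ε|} 𝟙_{[0,1)^p}(a+ε·(b−a)) δ_{a+ε·(b−a)}`
associated to the indicator `𝟙_{[a,b⟩}`. -/
noncomputable def cornerMeasure (p : ℕ) (a b : Fin p → ℝ) : SignedMeasure (Fin p → ℝ) :=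
  ∑ ε : Fin p → Bool,
    ((-1 : ℝ) ^ (Finset.univ.filter (fun i => ε i = true)).card *
      (if ∀ i, 0 ≤ a i + (if ε i then (1 : ℝ) else 0) * (b i - a i)
            ∧ a i + (if ε i then (1 : ℝ) else 0) * (b i - a i) < 1 then (1 : ℝ) else 0)) •
    (Measure.dirac (fun i => a i + (if ε i then (1 : ℝ) else 0) * (b i - a i))).toSignedMeasure

/-- The total variation norm of the signed measure associated to `𝟙_{[a,b⟩}` equals `2^q`,
where `q` is the number of coordinates `i` with `b i < 1`; in particular it is `≤ 2^p`. -/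
theorem cornerMeasure_totalVariation (p : ℕ) (a b : Fin p → ℝ)
    (hab : ∀ i, 0 ≤ a i ∧ a i < b i ∧ b i ≤ 1) :
    (cornerMeasure p a b).totalVariation Set.univ
        = (2 : ℝ≥0∞) ^ (Finset.univ.filter (fun i => b i < 1)).card ∧
      (cornerMeasure p a b).totalVariation Set.univ ≤ (2 : ℝ≥0∞) ^ p := by
  classical
  set S : Finset (Fin p) := Finset.univ.filter (fun i => b i < 1) with hS
  set x : (Fin p → Bool) → (Fin p → ℝ) := fun ε i => if ε i then b i else a i with hx
  have hxinj : Function.Injective x := by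
    intro ε ε' h
    funext i
    by_contra hne
    have hcf := congrFun h i
    simp only [hx] at hcf
    cases hε : ε i <;> cases hε' : ε' i <;> rw [hε, hε'] at hcf <;>
      simp only [if_true, if_false] at hcf
    · exact hne (hε.trans hε'.symm)
    · exact absurd hcf (ne_of_lt (hab i).2.1)
    · exact absurd hcf (ne_of_gt (hab i).2.1)
    · exact hne (hε.trans hε'.symm)
  set E : Finset (Fin p → Bool) :=
    Finset.univ.filter (fun ε => ∀ i, ε i = true → b i < 1) with hE
  have hEcard : E.card = 2 ^ S.card := by
    have h1 : E.card = Fintype.card {ε : Fin p → Bool // ∀ i, ε i = true → b i < 1} :=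
      (Fintype.card_subtype _).symm
    rw [h1, Fintype.card_congr
      (Equiv.subtypePiEquivPi (p := fun i (x : Bool) => x = true → b i < 1)),
      Fintype.card_pi]
    have h2 : ∀ i : Fin p,
        Fintype.card {x : Bool // x = true → b i < 1} = if b i < 1 then 2 else 1 := by
      intro i
      by_cases h : b i < 1 <;> simp [Fintype.card_subtype, h, Finset.filter_eq']
    rw [Finset.prod_congr rfl (fun i _ => h2 i), Finset.prod_ite, Finset.prod_const,
      Finset.prod_const, one_pow, mul_one, hS]
  set Ev : Finset (Fin p → Bool) :=
    E.filter (fun ε => Even (Finset.univ.filter (fun i => ε i = true)).card) with hEv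
  set Od : Finset (Fin p → Bool) :=
    E.filter (fun ε => ¬ Even (Finset.univ.filter (fun i => ε i = true)).card) with hOd
  -- mutual singularity
  have hPN : Measure.MutuallySingular (∑ ε ∈ Ev, Measure.dirac (x ε)) (∑ ε ∈ Od, Measure.dirac (x ε)) := by
    refine ⟨(↑(Ev.image x) : Set (Fin p → ℝ))ᶜ, (Finset.measurableSet _).compl, ?_, ?_⟩
    · rw [Measure.finset_sum_apply]
      refine Finset.sum_eq_zero fun ε hε => ?_
      have hmem : x ε ∈ (↑(Ev.image x) : Set (Fin p → ℝ)) := by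
        simpa using Finset.mem_image_of_mem x hε
      rw [Measure.dirac_apply, Set.indicator_of_notMem (Set.notMem_compl_iff.mpr hmem)]
    · rw [compl_compl, Measure.finset_sum_apply]
      refine Finset.sum_eq_zero fun ε hε => ?_
      have hmem : x ε ∉ (↑(Ev.image x) : Set (Fin p → ℝ)) := by
        simp only [Finset.coe_image, Set.mem_image, Finset.mem_coe]
        rintro ⟨ε', hε', heq⟩
        have : ε' = ε := hxinj heq
        subst this
        exact (Finset.mem_filter.mp hε).2 (Finset.mem_filter.mp hε').2
      rw [Measure.dirac_apply, Set.indicator_of_notMem hmem]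
  haveI hPf : IsFiniteMeasure (∑ ε ∈ Ev, Measure.dirac (x ε)) := inferInstance
  haveI hNf : IsFiniteMeasure (∑ ε ∈ Od, Measure.dirac (x ε)) := inferInstance
  set j : JordanDecomposition (Fin p → ℝ) :=
    { posPart := ∑ ε ∈ Ev, Measure.dirac (x ε)
      negPart := ∑ ε ∈ Od, Measure.dirac (x ε)
      posPart_finite := hPf
      negPart_finite := hNf
      mutuallySingular := hPN } with hj
  have hkey : cornerMeasure p a b = j.toSignedMeasure := by
    rw [hj, JordanDecomposition.toSignedMeasure]
    simp only
    rw [toSignedMeasure_finset_sum, toSignedMeasure_finset_sum]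
    calc cornerMeasure p a b
        = ∑ ε : Fin p → Bool,
            (if ε ∈ E then ((-1:ℝ) ^ (Finset.univ.filter (fun i => ε i = true)).card) else 0) •
              (Measure.dirac (x ε)).toSignedMeasure := by
          rw [cornerMeasure]
          refine Finset.sum_congr rfl fun ε _ => ?_
          have hxε : (fun i => a i + (if ε i then (1:ℝ) else 0) * (b i - a i)) = x ε := by
            funext i
            by_cases h : ε i <;> simp [hx, h]
          simp only [hxε]
          congr 1
          have hcond : (∀ i, 0 ≤ a i + (if ε i then (1:ℝ) else 0) * (b i - a i)
                ∧ a i + (if ε i then (1:ℝ) else 0) * (b i - a i) < 1) ↔ ε ∈ E := by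
            rw [hE]
            simp only [Finset.mem_filter, Finset.mem_univ, true_and]
            constructor
            · intro h i hi
              have h2 := (h i).2
              rw [hi] at h2
              simp only [if_true, one_mul] at h2
              linarith
            · intro h i
              by_cases hi : ε i
              · have hb := h i hi
                rw [if_pos hi]
                constructor <;> [linarith [(hab i).1, (hab i).2.1]; linarith]
              · rw [if_neg hi]
                constructor <;>
                  [linarith [(hab i).1]; linarith [(hab i).2.1, (hab i).2.2]]
          by_cases h : ε ∈ E
          · rw [if_pos (hcond.mpr h), if_pos h, mul_one]
          · rw [if_neg (fun hc => h (hcond.mp hc)), if_neg h, mul_zero]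
      _ = ∑ ε ∈ E, ((-1:ℝ) ^ (Finset.univ.filter (fun i => ε i = true)).card) •
              (Measure.dirac (x ε)).toSignedMeasure := by
          simp only [ite_smul, zero_smul]
          rw [← Finset.sum_filter, Finset.filter_mem_eq_inter, Finset.univ_inter]
      _ = (∑ ε ∈ Ev, (Measure.dirac (x ε)).toSignedMeasure)
            - (∑ ε ∈ Od, (Measure.dirac (x ε)).toSignedMeasure) := by
          rw [← Finset.sum_filter_add_sum_filter_not E
            (fun ε => Even (Finset.univ.filter (fun i => ε i = true)).card), ← hEv, ← hOd,
            sub_eq_add_neg, ← Finset.sum_neg_distrib]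
          congr 1
          · refine Finset.sum_congr rfl fun ε hε => ?_
            rw [Even.neg_one_pow (Finset.mem_filter.mp hε).2, one_smul]
          · refine Finset.sum_congr rfl fun ε hε => ?_
            rw [Odd.neg_one_pow (Nat.not_even_iff_odd.mp (Finset.mem_filter.mp hε).2)]
            exact neg_one_smul ℝ (Measure.dirac (x ε)).toSignedMeasure
  have htv : (cornerMeasure p a b).totalVariation Set.univ = (2 : ℝ≥0∞) ^ S.card := by
    rw [hkey, SignedMeasure.totalVariation,
      JordanDecomposition.toJordanDecomposition_toSignedMeasure, hj]
    simp only [Measure.coe_add, Pi.add_apply]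
    rw [Measure.finset_sum_apply, Measure.finset_sum_apply]
    simp only [Measure.dirac_apply, Set.indicator_univ, Pi.one_apply, Finset.sum_const,
      nsmul_eq_mul, mul_one]
    rw [← Nat.cast_add, hEv, hOd, Finset.card_filter_add_card_filter_not, hEcard]
    push_cast
    ring
  refine ⟨htv, ?_⟩
  rw [htv]
  refine pow_le_pow_right₀ one_le_two ?_
  calc S.card ≤ (Finset.univ : Finset (Fin p)).card := Finset.card_filter_le _ _
    _ = p := by simp
end

section
/- If d < p, the signed measure μ_T associated with a depth-d regression tree function T is supported on the set F_d of points x ∈ [0,1]^p having at most d positive components. -/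
open MeasureTheory Finset
open scoped ENNReal Classical

/-- Split a box `(a, b) ⊆ [0,1]^p` along coordinate `j` at threshold
`a j + u * (b j − a j)`: the child `false` is the lower part (upper bound updated),
the child `true` is the upper part (lower bound updated). -/
noncomputable def childBox {p : ℕ} (ab : (Fin p → ℝ) × (Fin p → ℝ)) (j : Fin p) (u : ℝ)
    (c : Bool) : (Fin p → ℝ) × (Fin p → ℝ) :=
  let t := ab.1 j + u * (ab.2 j - ab.1 j)
  if c then (Function.update ab.1 j t, ab.2) else (ab.1, Function.update ab.2 j t)

/-- Fold a word of the binary tree through a splitting scheme `ξ`, starting from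
box `cur` located at node `pos`. -/
noncomputable def boxAux {p : ℕ} (ξ : List Bool → Fin p × ℝ) :
    (Fin p → ℝ) × (Fin p → ℝ) → List Bool → List Bool → (Fin p → ℝ) × (Fin p → ℝ)
  | cur, _, [] => cur
  | cur, pos, c :: rest => boxAux ξ (childBox cur (ξ pos).1 (ξ pos).2 c) (pos ++ [c]) rest

/-- The box attached to the node `w` of the binary tree, for the splitting scheme `ξ`,
starting from the unit box `[0,1]^p`. -/
noncomputable def nodeBox {p : ℕ} (ξ : List Bool → Fin p × ℝ) (w : List Bool) :
    (Fin p → ℝ) × (Fin p → ℝ) :=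
  boxAux ξ ((fun _ => 0), (fun _ => 1)) [] w

/-- The region of `[0,1]^p` corresponding to a box `(a,b)` produced by recursive binary
splitting: it is the product of the intervals `[a i, b i)` (when `b i < 1`, i.e.
coordinate `i` has been split from above) and `[a i, b i]` (when `b i = 1`). -/
def boxRegion {p : ℕ} (ab : (Fin p → ℝ) × (Fin p → ℝ)) : Set (Fin p → ℝ) :=
  {x | ∀ i, ab.1 i ≤ x i ∧ (if ab.2 i < 1 then x i < ab.2 i else x i ≤ ab.2 i)}

/-- The tree function `T = ∑_{v ∈ {0,1}^d} r_v 𝟙_{A_v}` with leaf regions given by the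
depth-`d` recursive binary splitting scheme `ξ` and leaf values `r`. -/
noncomputable def treeFn (p d : ℕ) (ξ : List Bool → Fin p × ℝ) (r : (Fin d → Bool) → ℝ) :
    (Fin p → ℝ) → ℝ :=
  fun x => ∑ v : Fin d → Bool,
    r v * (if x ∈ boxRegion (nodeBox ξ (List.ofFn fun i => v i)) then (1 : ℝ) else 0)

/-! ### Auxiliary material -/

namespace TreeSupport

variable {p : ℕ}

/-- Invariant for boxes produced by the splitting scheme. -/
def GoodBox {p : ℕ} (ab : (Fin p → ℝ) × (Fin p → ℝ)) : Prop :=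
  ∀ i, 0 ≤ ab.1 i ∧ ab.1 i < ab.2 i ∧ ab.2 i ≤ 1

/-- The set of coordinates that have been split. -/
noncomputable def SplitSet {p : ℕ} (ab : (Fin p → ℝ) × (Fin p → ℝ)) : Finset (Fin p) :=
  Finset.univ.filter (fun i => ¬(ab.1 i = 0 ∧ ab.2 i = 1))

lemma childBox_good {ab : (Fin p → ℝ) × (Fin p → ℝ)} {j : Fin p} {u : ℝ} {c : Bool}
    (hu : u ∈ Set.Ioo (0 : ℝ) 1) (h : GoodBox ab) : GoodBox (childBox ab j u c) := by
  obtain ⟨hu0, hu1⟩ := hu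
  obtain ⟨h0, h1, h2⟩ := h j
  have ht1 : ab.1 j < ab.1 j + u * (ab.2 j - ab.1 j) := by nlinarith
  have ht2 : ab.1 j + u * (ab.2 j - ab.1 j) < ab.2 j := by nlinarith
  intro i
  rcases eq_or_ne i j with rfl | hij
  · cases c <;> simp only [childBox, Bool.false_eq_true, if_false, if_true,
      Function.update_self]
    · exact ⟨h0, ht1, by linarith⟩
    · exact ⟨by linarith, ht2, h2⟩
  · cases c <;> simp only [childBox, Bool.false_eq_true, if_false, if_true,
      Function.update_of_ne hij]
    · exact h i
    · exact h i

lemma childBox_split {ab : (Fin p → ℝ) × (Fin p → ℝ)} {j : Fin p} {u : ℝ} {c : Bool} :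
    SplitSet (childBox ab j u c) ⊆ insert j (SplitSet ab) := by
  intro i hi
  simp only [SplitSet, Finset.mem_filter, Finset.mem_univ, true_and] at hi
  rcases eq_or_ne i j with rfl | hij
  · exact Finset.mem_insert_self _ _
  · refine Finset.mem_insert_of_mem ?_
    simp only [SplitSet, Finset.mem_filter, Finset.mem_univ, true_and]
    intro hcontra
    apply hi
    cases c <;> simp only [childBox, Bool.false_eq_true, if_false, if_true,
      Function.update_of_ne hij] <;> exact hcontra

lemma boxAux_nil (ξ : List Bool → Fin p × ℝ) (cur : (Fin p → ℝ) × (Fin p → ℝ))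
    (pos : List Bool) : boxAux ξ cur pos [] = cur := rfl

lemma boxAux_cons (ξ : List Bool → Fin p × ℝ) (cur : (Fin p → ℝ) × (Fin p → ℝ))
    (pos : List Bool) (c : Bool) (w : List Bool) :
    boxAux ξ cur pos (c :: w) = boxAux ξ (childBox cur (ξ pos).1 (ξ pos).2 c) (pos ++ [c]) w :=
  rfl

lemma boxAux_good (ξ : List Bool → Fin p × ℝ) (hξ : ∀ w, (ξ w).2 ∈ Set.Ioo (0 : ℝ) 1) :
    ∀ (w pos : List Bool) (cur : (Fin p → ℝ) × (Fin p → ℝ)),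
      GoodBox cur → GoodBox (boxAux ξ cur pos w) := by
  intro w
  induction w with
  | nil => intro pos cur h; exact h
  | cons c w ih =>
    intro pos cur h
    rw [boxAux_cons]
    exact ih _ _ (childBox_good (hξ pos) h)

lemma boxAux_split (ξ : List Bool → Fin p × ℝ) :
    ∀ (w pos : List Bool) (cur : (Fin p → ℝ) × (Fin p → ℝ)),
      (SplitSet (boxAux ξ cur pos w)).card ≤ (SplitSet cur).card + w.length := by
  intro w
  induction w with
  | nil => intro pos cur; simp [boxAux_nil]
  | cons c w ih =>
    intro pos cur
    rw [boxAux_cons]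
    calc (SplitSet (boxAux ξ (childBox cur (ξ pos).1 (ξ pos).2 c) (pos ++ [c]) w)).card
        ≤ (SplitSet (childBox cur (ξ pos).1 (ξ pos).2 c)).card + w.length := ih _ _
      _ ≤ (insert (ξ pos).1 (SplitSet cur)).card + w.length :=
          Nat.add_le_add_right (Finset.card_le_card childBox_split) _
      _ ≤ ((SplitSet cur).card + 1) + w.length := by
          gcongr; exact Finset.card_insert_le _ _
      _ = (SplitSet cur).card + (c :: w).length := by simp [List.length_cons]; ring

lemma nodeBox_good (ξ : List Bool → Fin p × ℝ) (hξ : ∀ w, (ξ w).2 ∈ Set.Ioo (0 : ℝ) 1)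
    (w : List Bool) : GoodBox (nodeBox ξ w) :=
  boxAux_good ξ hξ w [] _ (fun _ => ⟨le_refl _, zero_lt_one, le_refl _⟩)

lemma nodeBox_split (ξ : List Bool → Fin p × ℝ) (w : List Bool) :
    (SplitSet (nodeBox ξ w)).card ≤ w.length := by
  have h := boxAux_split ξ w [] ((fun _ => (0:ℝ)), (fun _ => (1:ℝ)))
  have h0 : SplitSet ((fun _ => (0:ℝ)), (fun _ => (1:ℝ))) = (∅ : Finset (Fin p)) := by
    ext i; simp [SplitSet]
  rw [h0] at h
  simpa [nodeBox] using h

/-- The corner of a box selected by `ε`. -/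
noncomputable def cornerOf {p : ℕ} (ab : (Fin p → ℝ) × (Fin p → ℝ)) (ε : Fin p → Bool) :
    Fin p → ℝ := fun i => if ε i then ab.2 i else ab.1 i

/-- The signed coefficient of a corner. -/
noncomputable def coefOf {p : ℕ} (ab : (Fin p → ℝ) × (Fin p → ℝ)) (ε : Fin p → Bool) : ℝ :=
  ∏ i, (if ε i then (if ab.2 i < 1 then (-1 : ℝ) else 0) else 1)

lemma corner_mem_Icc {ab : (Fin p → ℝ) × (Fin p → ℝ)} (h : GoodBox ab) (ε : Fin p → Bool)
    (i : Fin p) : 0 ≤ cornerOf ab ε i ∧ cornerOf ab ε i ≤ 1 := by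
  obtain ⟨h0, h1, h2⟩ := h i
  unfold cornerOf
  by_cases hε : ε i <;> simp [hε] <;> constructor <;> linarith

lemma corner_pos_subset {ab : (Fin p → ℝ) × (Fin p → ℝ)} (h : GoodBox ab) (ε : Fin p → Bool)
    (hlt : ∀ i, cornerOf ab ε i < 1) :
    (Finset.univ.filter fun j => 0 < cornerOf ab ε j) ⊆ SplitSet ab := by
  intro i hi
  simp only [Finset.mem_filter, Finset.mem_univ, true_and] at hi
  simp only [SplitSet, Finset.mem_filter, Finset.mem_univ, true_and]
  rintro ⟨ha, hb⟩
  have hl := hlt i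
  unfold cornerOf at hi hl
  by_cases hε : ε i <;> simp [hε] at hi hl
  · rw [hb] at hl; exact absurd hl (lt_irrefl 1)
  · rw [ha] at hi; exact absurd hi (lt_irrefl 0)

/-- The atomic signed measure associated to the tree. -/
noncomputable def nu (p d : ℕ) (ξ : List Bool → Fin p × ℝ) (r : (Fin d → Bool) → ℝ) :
    SignedMeasure (Fin p → ℝ) :=
  ∑ v : Fin d → Bool, ∑ ε : Fin p → Bool,
    (r v * coefOf (nodeBox ξ (List.ofFn fun i => v i)) ε) •
      (Measure.dirac (cornerOf (nodeBox ξ (List.ofFn fun i => v i)) ε)).toSignedMeasure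

lemma sm_sum_apply {α ι : Type*} [MeasurableSpace α] (s : Finset ι)
    (f : ι → SignedMeasure α) (A : Set α) : (∑ i ∈ s, f i) A = ∑ i ∈ s, f i A := by
  classical
  induction s using Finset.induction_on with
  | empty => simp
  | insert _ _ h ih => rw [Finset.sum_insert h, VectorMeasure.add_apply, ih, Finset.sum_insert h]

lemma nu_apply (p d : ℕ) (ξ : List Bool → Fin p × ℝ) (r : (Fin d → Bool) → ℝ)
    {A : Set (Fin p → ℝ)} (hA : MeasurableSet A) :
    nu p d ξ r A = ∑ v : Fin d → Bool, ∑ ε : Fin p → Bool,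
      (r v * coefOf (nodeBox ξ (List.ofFn fun i => v i)) ε) *
        (if cornerOf (nodeBox ξ (List.ofFn fun i => v i)) ε ∈ A then (1:ℝ) else 0) := by
  rw [nu, sm_sum_apply]
  refine Finset.sum_congr rfl fun v _ => ?_
  rw [sm_sum_apply]
  refine Finset.sum_congr rfl fun ε _ => ?_
  rw [VectorMeasure.smul_apply, Measure.toSignedMeasure_apply_measurable hA,
    measureReal_def, Measure.dirac_apply' _ hA]
  by_cases h : cornerOf (nodeBox ξ (List.ofFn fun i => v i)) ε ∈ A <;>
    simp [h, Set.indicator]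

lemma prod_ite_all {ι : Type*} [Fintype ι] (Q : ι → Prop) [DecidablePred Q]
    [Decidable (∀ i, Q i)] :
    (∏ i, if Q i then (1:ℝ) else 0) = if (∀ i, Q i) then 1 else 0 := by
  by_cases h : ∀ i, Q i
  · rw [if_pos h]; exact Finset.prod_eq_one fun i _ => if_pos (h i)
  · rw [if_neg h]
    push_neg at h
    obtain ⟨i, hi⟩ := h
    exact Finset.prod_eq_zero (Finset.mem_univ i) (if_neg hi)

lemma coord_factor {a b xi : ℝ} (h0a : 0 ≤ a) (hab : a ≤ b) (hxi : xi ≤ 1) :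
    ((if b < 1 then (-1:ℝ) else 0) * (if (0 ≤ b ∧ b ≤ xi) then (1:ℝ) else 0)
      + 1 * (if (0 ≤ a ∧ a ≤ xi) then (1:ℝ) else 0))
    = if (a ≤ xi ∧ (if b < 1 then xi < b else xi ≤ b)) then 1 else 0 := by
  have h0b : 0 ≤ b := h0a.trans hab
  by_cases hb : b < 1
  · by_cases h1 : a ≤ xi
    · by_cases h2 : b ≤ xi
      · simp [hb, h1, h2, h0a, h0b, not_lt.2 h2]
      · simp [hb, h1, h2, h0a, h0b, not_le.1 h2]
    · have h2 : ¬ b ≤ xi := fun h => h1 (hab.trans h)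
      simp [hb, h1, h2, h0a, h0b]
  · have h2 : xi ≤ b := hxi.trans (not_lt.1 hb)
    by_cases h1 : a ≤ xi
    · by_cases h3 : b ≤ xi <;> simp [hb, h1, h2, h3, h0a, h0b]
    · by_cases h3 : b ≤ xi <;> simp [hb, h1, h2, h3, h0a, h0b]

lemma nu_box (p d : ℕ) (ξ : List Bool → Fin p × ℝ) (hξ : ∀ w, (ξ w).2 ∈ Set.Ioo (0 : ℝ) 1)
    (r : (Fin d → Bool) → ℝ) (x : Fin p → ℝ) (hx : ∀ i, x i ∈ Set.Icc (0 : ℝ) 1)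
    (hmeas : MeasurableSet {y : Fin p → ℝ | ∀ i, 0 ≤ y i ∧ y i ≤ x i}) :
    nu p d ξ r {y | ∀ i, 0 ≤ y i ∧ y i ≤ x i} = treeFn p d ξ r x := by
  rw [nu_apply p d ξ r hmeas, treeFn]
  refine Finset.sum_congr rfl fun v _ => ?_
  set ab := nodeBox ξ (List.ofFn fun i => v i) with hab
  have hgood : GoodBox ab := nodeBox_good ξ hξ _
  have step1 : ∀ ε : Fin p → Bool,
      coefOf ab ε * (if cornerOf ab ε ∈ {y : Fin p → ℝ | ∀ i, 0 ≤ y i ∧ y i ≤ x i}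
        then (1:ℝ) else 0)
      = ∏ i, ((if ε i then (if ab.2 i < 1 then (-1 : ℝ) else 0) else 1) *
          (if (0 ≤ (if ε i then ab.2 i else ab.1 i) ∧ (if ε i then ab.2 i else ab.1 i) ≤ x i)
            then (1:ℝ) else 0)) := by
    intro ε
    rw [Finset.prod_mul_distrib, coefOf]
    congr 1
    have : (cornerOf ab ε ∈ {y : Fin p → ℝ | ∀ i, 0 ≤ y i ∧ y i ≤ x i}) =
        ∀ i, 0 ≤ (if ε i then ab.2 i else ab.1 i) ∧ (if ε i then ab.2 i else ab.1 i) ≤ x i := by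
      simp [cornerOf, Set.mem_setOf_eq]
    rw [if_congr (iff_of_eq this) rfl rfl]
    exact (prod_ite_all (fun i => (0 ≤ if ε i then ab.2 i else ab.1 i) ∧
      (if ε i then ab.2 i else ab.1 i) ≤ x i)).symm
  have step2 : ∀ (f : Fin p → Bool → ℝ),
      (∑ ε : Fin p → Bool, ∏ i, f i (ε i)) = ∏ i, (f i true + f i false) := by
    intro f
    rw [← Fintype.prod_sum]
    exact Finset.prod_congr rfl fun i _ => by rw [Fintype.sum_bool]
  trans (r v * ∑ ε : Fin p → Bool, coefOf ab ε *
      (if cornerOf ab ε ∈ {y : Fin p → ℝ | ∀ i, 0 ≤ y i ∧ y i ≤ x i} then (1:ℝ) else 0))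
  · rw [Finset.mul_sum]
    refine Finset.sum_congr rfl fun ε _ => ?_
    rw [mul_assoc]
    by_cases h : cornerOf ab ε ∈ {y : Fin p → ℝ | ∀ i, 0 ≤ y i ∧ y i ≤ x i}
    · simp only [if_pos h]
    · simp only [if_neg h]
  trans (r v * ∑ ε : Fin p → Bool,
      ∏ i, ((if ε i then (if ab.2 i < 1 then (-1 : ℝ) else 0) else 1) *
        (if (0 ≤ (if ε i then ab.2 i else ab.1 i) ∧ (if ε i then ab.2 i else ab.1 i) ≤ x i)
          then (1:ℝ) else 0)))
  · congr 1
    exact Finset.sum_congr rfl fun ε _ => step1 ε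
  trans (r v * ∏ i, (((if ab.2 i < 1 then (-1 : ℝ) else 0) *
        (if (0 ≤ ab.2 i ∧ ab.2 i ≤ x i) then (1:ℝ) else 0))
      + 1 * (if (0 ≤ ab.1 i ∧ ab.1 i ≤ x i) then (1:ℝ) else 0)))
  · congr 1
    exact step2 (fun i bb => (if bb then (if ab.2 i < 1 then (-1 : ℝ) else 0) else 1) *
      (if (0 ≤ (if bb then ab.2 i else ab.1 i) ∧ (if bb then ab.2 i else ab.1 i) ≤ x i)
        then (1:ℝ) else 0))
  congr 1
  trans (∏ i, (if (ab.1 i ≤ x i ∧ (if ab.2 i < 1 then x i < ab.2 i else x i ≤ ab.2 i))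
      then (1:ℝ) else 0))
  · refine Finset.prod_congr rfl fun i _ => ?_
    exact coord_factor (hgood i).1 (le_of_lt (hgood i).2.1) (hx i).2
  have hmem : (x ∈ boxRegion ab) =
      ∀ i, (ab.1 i ≤ x i ∧ (if ab.2 i < 1 then x i < ab.2 i else x i ≤ ab.2 i)) := rfl
  rw [hmem]
  by_cases hall : ∀ i, (ab.1 i ≤ x i ∧ (if ab.2 i < 1 then x i < ab.2 i else x i ≤ ab.2 i))
  · rw [if_pos hall]
    exact Finset.prod_eq_one fun i _ => if_pos (hall i)
  · rw [if_neg hall]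
    obtain ⟨i, hi⟩ := not_forall.1 hall
    exact Finset.prod_eq_zero (Finset.mem_univ i) (if_neg hi)

lemma measurableSet_box (p : ℕ) (x : Fin p → ℝ) :
    MeasurableSet {y : Fin p → ℝ | ∀ i, 0 ≤ y i ∧ y i ≤ x i} := by
  have h : {y : Fin p → ℝ | ∀ i, 0 ≤ y i ∧ y i ≤ x i}
      = ⋂ i, (fun y : Fin p → ℝ => y i) ⁻¹' (Set.Icc 0 (x i)) := by
    ext y; simp [Set.mem_iInter, Set.mem_Icc]
  rw [h]
  exact MeasurableSet.iInter fun i => (measurable_pi_apply i) measurableSet_Icc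

lemma measurableSet_U (p : ℕ) :
    MeasurableSet {y : Fin p → ℝ | ∀ i, 0 ≤ y i ∧ y i < 1} := by
  have h : {y : Fin p → ℝ | ∀ i, 0 ≤ y i ∧ y i < 1}
      = ⋂ i, (fun y : Fin p → ℝ => y i) ⁻¹' (Set.Ico 0 1) := by
    ext y; simp [Set.mem_iInter, Set.mem_Ico]
  rw [h]
  exact MeasurableSet.iInter fun i => (measurable_pi_apply i) measurableSet_Ico

/-- The π-system of boxes `[0, x]` with `x ∈ [0,1]^p`. -/
def Kboxes (p : ℕ) : Set (Set (Fin p → ℝ)) :=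
  {E | ∃ x : Fin p → ℝ, (∀ i, x i ∈ Set.Icc (0:ℝ) 1) ∧ E = {y | ∀ i, 0 ≤ y i ∧ y i ≤ x i}}

lemma isPiSystem_K (p : ℕ) : IsPiSystem (Kboxes p) := by
  rintro E ⟨a, ha, rfl⟩ F ⟨b, hb, rfl⟩ -
  refine ⟨fun i => min (a i) (b i), fun i =>
    ⟨le_min (ha i).1 (hb i).1, (min_le_left _ _).trans (ha i).2⟩, ?_⟩
  ext y
  simp only [Set.mem_inter_iff, Set.mem_setOf_eq, le_min_iff]
  constructor
  · rintro ⟨h1, h2⟩ i; exact ⟨(h1 i).1, (h1 i).2, (h2 i).2⟩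
  · intro h; exact ⟨fun i => ⟨(h i).1, (h i).2.1⟩, fun i => ⟨(h i).1, (h i).2.2⟩⟩

lemma exists_cap (p : ℕ) (z : Fin p → ℝ) (hz : ∀ i, z i < 1) :
    ∃ n : ℕ, ∀ i, z i ≤ 1 - 1/(n+1) := by
  rcases isEmpty_or_nonempty (Fin p) with h | h
  · exact ⟨0, fun i => (h.false i).elim⟩
  · obtain ⟨i0, -, hM0⟩ := Finset.exists_mem_eq_sup' (Finset.univ_nonempty (α := Fin p)) z
    have hM : ∀ i, z i ≤ Finset.univ.sup' Finset.univ_nonempty z := fun i =>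
      Finset.le_sup' z (Finset.mem_univ i)
    have hM1 : Finset.univ.sup' Finset.univ_nonempty z < 1 := hM0 ▸ hz i0
    obtain ⟨n, hn⟩ := exists_nat_one_div_lt
      (by linarith : (0:ℝ) < 1 - Finset.univ.sup' Finset.univ_nonempty z)
    exact ⟨n, fun i => by have := hM i; linarith⟩

lemma one_div_nat_pos (n : ℕ) : (0:ℝ) < 1/(n+1) := by positivity

lemma one_sub_div_mem (n : ℕ) : (0:ℝ) ≤ 1 - 1/(n+1) ∧ (1:ℝ) - 1/(n+1) ≤ 1 := by
  have h1 : (0:ℝ) < (n:ℝ) + 1 := by positivity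
  have h2 : 1/((n:ℝ)+1) ≤ 1 := by
    rw [div_le_one h1]; linarith [Nat.cast_nonneg (α := ℝ) n]
  constructor <;> linarith [one_div_nat_pos n]

lemma U_mem_genK (p : ℕ) :
    MeasurableSet[MeasurableSpace.generateFrom (Kboxes p)]
      {y : Fin p → ℝ | ∀ i, 0 ≤ y i ∧ y i < 1} := by
  have hU : {y : Fin p → ℝ | ∀ i, 0 ≤ y i ∧ y i < 1} =
      ⋃ n : ℕ, {y : Fin p → ℝ | ∀ i, 0 ≤ y i ∧ y i ≤ 1 - 1/(n+1)} := by
    ext y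
    simp only [Set.mem_setOf_eq, Set.mem_iUnion]
    constructor
    · intro h
      obtain ⟨n, hn⟩ := exists_cap p y (fun i => (h i).2)
      exact ⟨n, fun i => ⟨(h i).1, hn i⟩⟩
    · rintro ⟨n, hn⟩ i
      exact ⟨(hn i).1, by linarith [(hn i).2, one_div_nat_pos n]⟩
  rw [hU]
  refine MeasurableSet.iUnion fun n => MeasurableSpace.measurableSet_generateFrom ?_
  exact ⟨fun _ => 1 - 1/(n+1), fun i => Set.mem_Icc.mpr (one_sub_div_mem n), rfl⟩

lemma trace_genK (p : ℕ) {B : Set (Fin p → ℝ)} (hB : MeasurableSet B) :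
    MeasurableSet[MeasurableSpace.generateFrom (Kboxes p)]
      (B ∩ {y : Fin p → ℝ | ∀ i, 0 ≤ y i ∧ y i < 1}) := by
  let m' : MeasurableSpace (Fin p → ℝ) :=
    { MeasurableSet' := fun A => MeasurableSet[MeasurableSpace.generateFrom (Kboxes p)]
        (A ∩ {y : Fin p → ℝ | ∀ i, 0 ≤ y i ∧ y i < 1})
      measurableSet_empty := by simp
      measurableSet_compl := fun A hA => by
        show MeasurableSet[MeasurableSpace.generateFrom (Kboxes p)]
          (Aᶜ ∩ {y : Fin p → ℝ | ∀ i, 0 ≤ y i ∧ y i < 1})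
        have hA' : MeasurableSet[MeasurableSpace.generateFrom (Kboxes p)]
            (A ∩ {y : Fin p → ℝ | ∀ i, 0 ≤ y i ∧ y i < 1}) := hA
        have h2 : Aᶜ ∩ {y : Fin p → ℝ | ∀ i, 0 ≤ y i ∧ y i < 1} =
            {y : Fin p → ℝ | ∀ i, 0 ≤ y i ∧ y i < 1} ∩
              (A ∩ {y : Fin p → ℝ | ∀ i, 0 ≤ y i ∧ y i < 1})ᶜ := by
          ext z
          simp only [Set.mem_inter_iff, Set.mem_compl_iff, Set.mem_setOf_eq]
          tauto
        rw [h2]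
        exact (U_mem_genK p).inter hA'.compl
      measurableSet_iUnion := fun f hf => by
        show MeasurableSet[MeasurableSpace.generateFrom (Kboxes p)]
          ((⋃ n, f n) ∩ {y : Fin p → ℝ | ∀ i, 0 ≤ y i ∧ y i < 1})
        rw [Set.iUnion_inter]
        exact MeasurableSet.iUnion fun n => hf n }
  have hle : MeasurableSpace.pi ≤ m' := by
    show (⨆ i : Fin p, MeasurableSpace.comap (fun y : Fin p → ℝ => y i)
      Real.measurableSpace) ≤ m'
    refine iSup_le fun i => ?_
    have hreal : Real.measurableSpace = borel ℝ := rfl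
    rw [hreal, borel_eq_generateFrom_Iic, MeasurableSpace.comap_generateFrom]
    refine MeasurableSpace.generateFrom_le ?_
    rintro - ⟨-, ⟨t, rfl⟩, rfl⟩
    show MeasurableSet[MeasurableSpace.generateFrom (Kboxes p)]
      (((fun y : Fin p → ℝ => y i) ⁻¹' Set.Iic t) ∩ {y : Fin p → ℝ | ∀ i, 0 ≤ y i ∧ y i < 1})
    rcases lt_or_ge t 0 with ht | ht
    · have he : ((fun y : Fin p → ℝ => y i) ⁻¹' Set.Iic t) ∩
          {y : Fin p → ℝ | ∀ i, 0 ≤ y i ∧ y i < 1} = ∅ := by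
        ext z
        simp only [Set.mem_inter_iff, Set.mem_preimage, Set.mem_Iic, Set.mem_setOf_eq,
          Set.mem_empty_iff_false, iff_false, not_and]
        intro hzt hzU
        linarith [(hzU i).1]
      rw [he]
      exact @MeasurableSet.empty _ (MeasurableSpace.generateFrom (Kboxes p))
    rcases le_or_gt 1 t with ht1 | ht1
    · have he : ((fun y : Fin p → ℝ => y i) ⁻¹' Set.Iic t) ∩
          {y : Fin p → ℝ | ∀ i, 0 ≤ y i ∧ y i < 1} =
          {y : Fin p → ℝ | ∀ i, 0 ≤ y i ∧ y i < 1} := by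
        ext z
        simp only [Set.mem_inter_iff, Set.mem_preimage, Set.mem_Iic, Set.mem_setOf_eq,
          and_iff_right_iff_imp]
        intro hz
        linarith [(hz i).2]
      rw [he]
      exact U_mem_genK p
    · have he : ((fun y : Fin p → ℝ => y i) ⁻¹' Set.Iic t) ∩
          {y : Fin p → ℝ | ∀ i, 0 ≤ y i ∧ y i < 1} =
          ⋃ n : ℕ, {y : Fin p → ℝ | ∀ j, 0 ≤ y j ∧
            y j ≤ (fun j => if j = i then min t (1 - 1/(n+1)) else 1 - 1/(n+1)) j} := by
        ext z
        simp only [Set.mem_inter_iff, Set.mem_preimage, Set.mem_Iic, Set.mem_setOf_eq,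
          Set.mem_iUnion]
        constructor
        · rintro ⟨hzt, hzU⟩
          obtain ⟨n, hn⟩ := exists_cap p z (fun j => (hzU j).2)
          refine ⟨n, fun j => ⟨(hzU j).1, ?_⟩⟩
          by_cases hji : j = i
          · subst hji
            simp only [if_pos rfl]
            exact le_min hzt (hn j)
          · simp only [if_neg hji]
            exact hn j
        · rintro ⟨n, hn⟩
          constructor
          · have := (hn i).2
            simp only [if_pos rfl] at this
            exact this.trans (min_le_left _ _)
          · intro j
            refine ⟨(hn j).1, ?_⟩
            have h2 := (hn j).2
            have h3 : (fun j => if j = i then min t (1 - 1/(n+1)) else 1 - 1/(n+1)) j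
                ≤ 1 - 1/(n+1) := by
              by_cases hji : j = i
              · simp only [hji, if_pos rfl]; exact min_le_right _ _
              · simp only [if_neg hji]; exact le_refl _
            linarith [one_div_nat_pos n]
      rw [he]
      refine MeasurableSet.iUnion fun n => MeasurableSpace.measurableSet_generateFrom ?_
      refine ⟨_, fun j => ?_, rfl⟩
      by_cases hji : j = i
      · simp only [hji, if_pos rfl]
        refine Set.mem_Icc.mpr ⟨le_min ht (one_sub_div_mem n).1, ?_⟩
        exact (min_le_right _ _).trans (one_sub_div_mem n).2
      · simp only [if_neg hji]
        exact Set.mem_Icc.mpr (one_sub_div_mem n)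
  exact hle B hB

lemma tv_zero_of_forall {α : Type*} [MeasurableSpace α] (m : SignedMeasure α) {S : Set α}
    (hS : MeasurableSet S) (h : ∀ B, B ⊆ S → MeasurableSet B → m B = 0) :
    m.totalVariation S = 0 := by
  obtain ⟨i, hi₁, hi₂, hi₃, hpos, hneg⟩ := m.toJordanDecomposition_spec
  rw [SignedMeasure.totalVariation, Measure.add_apply, hpos, hneg,
    SignedMeasure.toMeasureOfZeroLE_apply _ hi₂ hi₁ hS,
    SignedMeasure.toMeasureOfLEZero_apply _ hi₃ hi₁.compl hS]
  have h1 := h _ Set.inter_subset_right (hi₁.inter hS)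
  have h2 := h _ Set.inter_subset_right (hi₁.compl.inter hS)
  simp [h1, h2]

lemma measS (p d : ℕ) :
    MeasurableSet {x : Fin p → ℝ | ¬ ((Finset.univ.filter (fun j => 0 < x j)).card ≤ d)} := by
  have hs : {x : Fin p → ℝ | ¬ ((Finset.univ.filter (fun j => 0 < x j)).card ≤ d)}
      = ⋃ (J : Finset (Fin p)) (_ : d < J.card), ⋂ j ∈ J, {x : Fin p → ℝ | 0 < x j} := by
    ext x
    simp only [Set.mem_setOf_eq, Set.mem_iUnion, Set.mem_iInter, not_le]
    constructor
    · intro hx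
      obtain ⟨J, hJsub, hJcard⟩ := Finset.exists_subset_card_eq hx
      refine ⟨J, by omega, fun j hj => ?_⟩
      exact (Finset.mem_filter.1 (hJsub hj)).2
    · rintro ⟨J, hJ, hall⟩
      have hsub : J ⊆ Finset.univ.filter (fun j => 0 < x j) := fun j hj =>
        Finset.mem_filter.2 ⟨Finset.mem_univ _, hall j hj⟩
      exact lt_of_lt_of_le hJ (Finset.card_le_card hsub)
  rw [hs]
  refine MeasurableSet.iUnion fun J => MeasurableSet.iUnion fun _ => ?_
  refine MeasurableSet.biInter J.countable_toSet fun j _ => ?_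
  exact measurableSet_lt measurable_const (measurable_pi_apply j)


end TreeSupport

/-- If `d < p`, the signed measure `μ_T` associated with a depth-`d` regression tree
function (i.e. the measure supported in `[0,1)^p` whose "cdf" on `[0,1]^p` is `T`)
is supported on the set `F_d` of points of `[0,1]^p` with at most `d` positive
coordinates: its total variation vanishes on the complement of `F_d`. -/
theorem treeFn_measure_support (p d : ℕ) (hp : 0 < p) (hdp : d < p)
    (ξ : List Bool → Fin p × ℝ) (hξ : ∀ w, (ξ w).2 ∈ Set.Ioo (0 : ℝ) 1)
    (r : (Fin d → Bool) → ℝ) (μ : SignedMeasure (Fin p → ℝ))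
    (hsupp : μ.totalVariation {x | ∀ i, 0 ≤ x i ∧ x i < 1}ᶜ = 0)
    (hcdf : ∀ x : Fin p → ℝ, (∀ i, x i ∈ Set.Icc (0 : ℝ) 1) →
      treeFn p d ξ r x = μ {y | ∀ i, 0 ≤ y i ∧ y i ≤ x i}) :
    μ.totalVariation {x : Fin p → ℝ |
      ¬ ((Finset.univ.filter (fun j => 0 < x j)).card ≤ d)} = 0 := by
  classical
  have hUmeas := TreeSupport.measurableSet_U p
  have hgen_le : MeasurableSpace.generateFrom (TreeSupport.Kboxes p)
      ≤ MeasurableSpace.pi := by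
    refine MeasurableSpace.generateFrom_le ?_
    rintro E ⟨x, hx, rfl⟩
    exact TreeSupport.measurableSet_box p x
  have hνbox : ∀ x : Fin p → ℝ, (∀ i, x i ∈ Set.Icc (0:ℝ) 1) →
      TreeSupport.nu p d ξ r {y | ∀ i, 0 ≤ y i ∧ y i ≤ x i} = treeFn p d ξ r x :=
    fun x hx => TreeSupport.nu_box p d ξ hξ r x hx (TreeSupport.measurableSet_box p x)
  have hcompl_sub : ∀ (A : Set (Fin p → ℝ)),
      A ⊆ {x | ∀ i, 0 ≤ x i ∧ x i < 1}ᶜ → μ A = 0 := by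
    intro A hA
    refine SignedMeasure.null_of_totalVariation_zero μ ?_
    refine le_antisymm ?_ zero_le
    calc μ.totalVariation A ≤ μ.totalVariation {x | ∀ i, 0 ≤ x i ∧ x i < 1}ᶜ :=
          measure_mono hA
      _ = 0 := hsupp
  have h1mem : ∀ i : Fin p, (fun _ => (1:ℝ)) i ∈ Set.Icc (0:ℝ) 1 :=
    fun _ => ⟨zero_le_one, le_refl 1⟩
  have box1meas := TreeSupport.measurableSet_box p (fun _ => (1:ℝ))
  have huniv : μ Set.univ = TreeSupport.nu p d ξ r Set.univ := by
    have hd1 : ∀ (m : SignedMeasure (Fin p → ℝ)), m Set.univ =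
        m {y : Fin p → ℝ | ∀ i, 0 ≤ y i ∧ y i ≤ (fun _ => (1:ℝ)) i} +
          m ({y : Fin p → ℝ | ∀ i, 0 ≤ y i ∧ y i ≤ (fun _ => (1:ℝ)) i}ᶜ) := by
      intro m
      rw [← VectorMeasure.of_union disjoint_compl_right box1meas box1meas.compl,
        Set.union_compl_self]
    rw [hd1 μ, hd1 (TreeSupport.nu p d ξ r)]
    have e1 : μ {y : Fin p → ℝ | ∀ i, 0 ≤ y i ∧ y i ≤ (fun _ => (1:ℝ)) i} =
        TreeSupport.nu p d ξ r {y : Fin p → ℝ | ∀ i, 0 ≤ y i ∧ y i ≤ (fun _ => (1:ℝ)) i} := by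
      rw [← hcdf _ h1mem, hνbox _ h1mem]
    have e2 : μ ({y : Fin p → ℝ | ∀ i, 0 ≤ y i ∧ y i ≤ (fun _ => (1:ℝ)) i}ᶜ) = 0 := by
      refine hcompl_sub _ ?_
      refine Set.compl_subset_compl.mpr ?_
      intro y hy i
      exact ⟨(hy i).1, le_of_lt (hy i).2⟩
    have e3 : TreeSupport.nu p d ξ r
        ({y : Fin p → ℝ | ∀ i, 0 ≤ y i ∧ y i ≤ (fun _ => (1:ℝ)) i}ᶜ) = 0 := by
      rw [TreeSupport.nu_apply p d ξ r box1meas.compl]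
      refine Finset.sum_eq_zero fun v _ => Finset.sum_eq_zero fun ε _ => ?_
      have hg := TreeSupport.nodeBox_good ξ hξ (List.ofFn fun i => v i)
      have hin : TreeSupport.cornerOf (nodeBox ξ (List.ofFn fun i => v i)) ε ∈
          {y : Fin p → ℝ | ∀ i, 0 ≤ y i ∧ y i ≤ (fun _ => (1:ℝ)) i} :=
        fun i => TreeSupport.corner_mem_Icc hg ε i
      rw [if_neg (fun hc => hc hin), mul_zero]
    rw [e1, e2, e3]
  have key : ∀ t : Set (Fin p → ℝ),
      MeasurableSet[MeasurableSpace.generateFrom (TreeSupport.Kboxes p)] t →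
        μ t = TreeSupport.nu p d ξ r t := by
    refine MeasurableSpace.induction_on_inter
      (m := MeasurableSpace.generateFrom (TreeSupport.Kboxes p)) rfl
      (TreeSupport.isPiSystem_K p) ?_ ?_ ?_ ?_
    · simp only [VectorMeasure.empty]
    · rintro E ⟨x, hx, rfl⟩
      rw [← hcdf x hx, hνbox x hx]
    · intro A hA hAeq
      have hAm : MeasurableSet A := hgen_le _ hA
      have h1 : μ Set.univ = μ A + μ Aᶜ := by
        rw [← VectorMeasure.of_union disjoint_compl_right hAm hAm.compl,
          Set.union_compl_self]
      have h2 : TreeSupport.nu p d ξ r Set.univ =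
          TreeSupport.nu p d ξ r A + TreeSupport.nu p d ξ r Aᶜ := by
        rw [← VectorMeasure.of_union disjoint_compl_right hAm hAm.compl,
          Set.union_compl_self]
      linarith
    · intro f hdisj hfm hind
      have hm : ∀ n, MeasurableSet (f n) := fun n => hgen_le _ (hfm n)
      rw [VectorMeasure.of_disjoint_iUnion hm hdisj,
        VectorMeasure.of_disjoint_iUnion hm hdisj]
      exact tsum_congr hind
  refine TreeSupport.tv_zero_of_forall μ (TreeSupport.measS p d) ?_
  intro B hBS hBm
  have hBU_meas : MeasurableSet (B ∩ {y : Fin p → ℝ | ∀ i, 0 ≤ y i ∧ y i < 1}) :=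
    hBm.inter hUmeas
  have hBD_meas : MeasurableSet (B \ {y : Fin p → ℝ | ∀ i, 0 ≤ y i ∧ y i < 1}) :=
    hBm.diff hUmeas
  have hsplit : μ B = μ (B ∩ {y : Fin p → ℝ | ∀ i, 0 ≤ y i ∧ y i < 1}) +
      μ (B \ {y : Fin p → ℝ | ∀ i, 0 ≤ y i ∧ y i < 1}) := by
    conv_lhs => rw [← Set.inter_union_diff B {y : Fin p → ℝ | ∀ i, 0 ≤ y i ∧ y i < 1}]
    refine VectorMeasure.of_union ?_ hBU_meas hBD_meas
    exact Set.disjoint_left.mpr fun x hx hx' => hx'.2 hx.2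
  have hdiff0 : μ (B \ {y : Fin p → ℝ | ∀ i, 0 ≤ y i ∧ y i < 1}) = 0 :=
    hcompl_sub _ (fun x hx => hx.2)
  have hBU : μ (B ∩ {y : Fin p → ℝ | ∀ i, 0 ≤ y i ∧ y i < 1}) =
      TreeSupport.nu p d ξ r (B ∩ {y : Fin p → ℝ | ∀ i, 0 ≤ y i ∧ y i < 1}) :=
    key _ (TreeSupport.trace_genK p hBm)
  have hν0 : TreeSupport.nu p d ξ r
      (B ∩ {y : Fin p → ℝ | ∀ i, 0 ≤ y i ∧ y i < 1}) = 0 := by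
    rw [TreeSupport.nu_apply p d ξ r hBU_meas]
    refine Finset.sum_eq_zero fun v _ => Finset.sum_eq_zero fun ε _ => ?_
    rw [if_neg, mul_zero]
    rintro ⟨hB', hU'⟩
    have hg := TreeSupport.nodeBox_good ξ hξ (List.ofFn fun i => v i)
    have hcard : ((Finset.univ.filter fun j =>
        0 < TreeSupport.cornerOf (nodeBox ξ (List.ofFn fun i => v i)) ε j)).card ≤ d := by
      have hsub := TreeSupport.corner_pos_subset hg ε (fun i => (hU' i).2)
      calc ((Finset.univ.filter fun j =>
            0 < TreeSupport.cornerOf (nodeBox ξ (List.ofFn fun i => v i)) ε j)).card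
          ≤ (TreeSupport.SplitSet (nodeBox ξ (List.ofFn fun i => v i))).card :=
            Finset.card_le_card hsub
        _ ≤ (List.ofFn fun i => v i).length := TreeSupport.nodeBox_split ξ _
        _ = d := by simp
    exact (hBS hB') hcard
  rw [hsplit, hdiff0, hBU, hν0, add_zero]
end

section
/- Any subset K of the space 𝕋 of tree functions with sup_{T∈K} ‖T‖_TV < ∞ is relatively compact in L²([0,1]^p, ν). -/
open MeasureTheory
open scoped ENNReal

/-- The reference probability measure `ν` on `[0,1]^p`: the product over coordinates of
`(Leb_{[0,1]} + δ_0 + δ_1)/3`.  Expanding the product, this is exactly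
`ν = 3^{−p} ∑_{J ⊆ {1,…,p}, ε ∈ {0,1}^{J^c}} Leb_{J,ε}`, the normalized sum of the
Lebesgue measures on all faces of the cube `[0,1]^p`. -/
noncomputable def nuMeas (p : ℕ) : Measure (Fin p → ℝ) :=
  Measure.pi fun _ : Fin p =>
    (3 : ℝ≥0∞)⁻¹ • (volume.restrict (Set.Icc (0 : ℝ) 1)
      + Measure.dirac (0 : ℝ) + Measure.dirac (1 : ℝ))

noncomputable def nu1 : Measure ℝ :=
  (3 : ℝ≥0∞)⁻¹ • (volume.restrict (Set.Icc (0 : ℝ) 1)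
      + Measure.dirac (0 : ℝ) + Measure.dirac (1 : ℝ))

instance : IsProbabilityMeasure nu1 := by
  constructor
  simp [nu1, Measure.smul_apply, Real.volume_Icc]
  rw [show (3:ℝ≥0∞)⁻¹+3⁻¹+3⁻¹ = 3*3⁻¹ from by ring,
    ENNReal.mul_inv_cancel (by norm_num) (by norm_num)]

lemma nuMeas_eq (p : ℕ) : nuMeas p = Measure.pi (fun _ : Fin p => nu1) := rfl

instance (p : ℕ) : IsProbabilityMeasure (nuMeas p) := by
  rw [nuMeas_eq]; infer_instance

lemma nuMeas_eval_preimage (p : ℕ) (i : Fin p) (A : Set ℝ) :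
    nuMeas p (Function.eval i ⁻¹' A) = nu1 A := by
  have : Function.eval i ⁻¹' A = Set.pi Set.univ (fun j => if j = i then A else Set.univ) := by
    ext x
    simp only [Set.mem_preimage, Set.mem_pi, Set.mem_univ, forall_true_left]
    constructor
    · intro h j; by_cases hj : j = i <;> simp [hj, h]
    · intro h; simpa using h i
  rw [nuMeas_eq, this, Measure.pi_pi]
  rw [Finset.prod_eq_single i (fun j _ hj => by simp [hj]) (by simp)]
  simp

lemma gfun_measurable (n : ℕ) : Measurable (fun t : ℝ => ((⌊(n:ℝ) * t⌋ : ℝ)/n)) :=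
  (((measurable_from_top : Measurable (Int.cast : ℤ → ℝ)).comp
    (measurable_const.mul measurable_id).floor).div_const _)

lemma strip_measurable (n : ℕ) (c : ℝ) :
    MeasurableSet {t : ℝ | ((⌊(n:ℝ) * t⌋ : ℝ)/n < c ∧ c ≤ t)} := by
  apply MeasurableSet.inter
  · exact measurableSet_lt (gfun_measurable n) measurable_const
  · exact measurableSet_le measurable_const measurable_id

lemma nu1_strip (n : ℕ) (hn : 0 < n) (c : ℝ) :
    nu1 {t : ℝ | ((⌊(n:ℝ) * t⌋ : ℝ)/n < c ∧ c ≤ t)} ≤ ENNReal.ofReal (1/n) := by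
  set A := {t : ℝ | ((⌊(n:ℝ) * t⌋ : ℝ)/n < c ∧ c ≤ t)} with hA
  have hAm := strip_measurable n c
  have hnR : (0:ℝ) < n := Nat.cast_pos.mpr hn
  have h0 : (0:ℝ) ∉ A := by
    rintro ⟨h1, h2⟩
    simp at h1
    linarith
  have h1' : (1:ℝ) ∉ A := by
    rintro ⟨h1, h2⟩
    rw [mul_one, Int.floor_natCast] at h1
    push_cast at h1
    rw [div_self (ne_of_gt hnR)] at h1
    linarith
  have hsub : A ⊆ Set.Ico c ((⌊(n:ℝ)*c⌋ + 1)/n) := by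
    intro t ⟨ht1, ht2⟩
    refine ⟨ht2, ?_⟩
    rw [div_lt_iff₀ hnR] at ht1
    have hfl : (⌊(n:ℝ)*t⌋ : ℝ) < n * c := by linarith [ht1]
    have hle : ⌊(n:ℝ)*t⌋ ≤ ⌊(n:ℝ)*c⌋ := by
      by_contra h
      push_neg at h
      have h2 : (⌊(n:ℝ)*c⌋ : ℝ) + 1 ≤ (⌊(n:ℝ)*t⌋ : ℝ) := by exact_mod_cast h
      have h3 := Int.lt_floor_add_one ((n:ℝ)*c)
      have h4 := Int.floor_le ((n:ℝ)*c)
      linarith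
    have ht3 : (n:ℝ) * t < ⌊(n:ℝ)*t⌋ + 1 := Int.lt_floor_add_one _
    have hle' : (⌊(n:ℝ)*t⌋:ℝ) ≤ (⌊(n:ℝ)*c⌋:ℝ) := by exact_mod_cast hle
    rw [lt_div_iff₀ hnR]
    linarith
  calc nu1 A = (3:ℝ≥0∞)⁻¹ * ((volume.restrict (Set.Icc (0:ℝ) 1)) A
        + Measure.dirac (0:ℝ) A + Measure.dirac (1:ℝ) A) := by
        simp [nu1, Measure.smul_apply, mul_add]
    _ ≤ (3:ℝ≥0∞)⁻¹ * (volume A + 0 + 0) := by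
        gcongr
        · exact Measure.restrict_le_self
        · rw [Measure.dirac_apply' _ hAm, Set.indicator_of_notMem h0]
        · rw [Measure.dirac_apply' _ hAm, Set.indicator_of_notMem h1']
    _ ≤ 1 * volume A := by
        rw [add_zero, add_zero]
        gcongr
        exact ENNReal.inv_le_one.mpr (by norm_num)
    _ ≤ ENNReal.ofReal (1/n) := by
        rw [one_mul]
        refine le_trans (measure_mono hsub) ?_
        rw [Real.volume_Ico]
        apply ENNReal.ofReal_le_ofReal
        have := Int.floor_le ((n:ℝ)*c)
        rw [div_sub' (ne_of_gt hnR), div_le_div_iff₀ hnR hnR]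
        nlinarith

section SM
variable {α : Type*} [MeasurableSpace α]

instance (μ : SignedMeasure α) : IsFiniteMeasure μ.totalVariation := by
  unfold SignedMeasure.totalVariation
  infer_instance

lemma sm_abs_le (μ : SignedMeasure α) {s : Set α} (hs : MeasurableSet s) :
    |μ s| ≤ (μ.totalVariation s).toReal := by
  set j := μ.toJordanDecomposition
  have hμ : μ s = (j.posPart s).toReal - (j.negPart s).toReal := by
    conv_lhs => rw [← μ.toSignedMeasure_toJordanDecomposition]
    rw [MeasureTheory.JordanDecomposition.toSignedMeasure]
    rw [MeasureTheory.VectorMeasure.sub_apply,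
      Measure.toSignedMeasure_apply_measurable hs,
      Measure.toSignedMeasure_apply_measurable hs]
    rfl
  have htv : (μ.totalVariation s).toReal = (j.posPart s).toReal + (j.negPart s).toReal := by
    rw [SignedMeasure.totalVariation, Measure.add_apply,
      ENNReal.toReal_add (measure_ne_top _ _) (measure_ne_top _ _)]
  rw [hμ, htv]
  have h1 : (0:ℝ) ≤ (j.posPart s).toReal := ENNReal.toReal_nonneg
  have h2 : (0:ℝ) ≤ (j.negPart s).toReal := ENNReal.toReal_nonneg
  rw [abs_sub_le_iff]; constructor <;> linarith

end SM

/-- helper: total boundedness from compact approximants -/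
lemma totallyBounded_of_compact_approx {X : Type*} [PseudoMetricSpace X] {S : Set X}
    (h : ∀ ε : ℝ, 0 < ε → ∃ K : Set X, IsCompact K ∧ ∀ f ∈ S, ∃ g ∈ K, dist f g ≤ ε) :
    TotallyBounded S := by
  rw [Metric.totallyBounded_iff]
  intro ε hε
  obtain ⟨K, hK, happrox⟩ := h (ε/3) (by linarith)
  obtain ⟨t, htfin, htcover⟩ := (Metric.totallyBounded_iff).mp hK.totallyBounded (ε/3) (by linarith)
  refine ⟨t, htfin, ?_⟩
  intro f hf
  obtain ⟨g, hgK, hdist⟩ := happrox f hf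
  obtain ⟨y, hy, hgy⟩ := Set.mem_iUnion₂.mp (htcover hgK)
  refine Set.mem_iUnion₂.mpr ⟨y, hy, ?_⟩
  rw [Metric.mem_ball] at hgy ⊢
  calc dist f y ≤ dist f g + dist g y := dist_triangle _ _ _
    _ < ε/3 + ε/3 := by exact add_lt_add_of_le_of_lt hdist hgy
    _ < ε := by linarith

section Grid

variable (p n : ℕ)

def Qset (x : Fin p → ℝ) : Set (Fin p → ℝ) := {y | ∀ i, 0 ≤ y i ∧ y i ≤ x i}

lemma Qset_meas (x : Fin p → ℝ) : MeasurableSet (Qset p x) := by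
  have : Qset p x = ⋂ i, ({y : Fin p → ℝ | 0 ≤ y i} ∩ {y | y i ≤ x i}) := by
    ext y; simp [Qset, forall_and, Set.mem_iInter]
  rw [this]
  exact MeasurableSet.iInter fun i =>
    (measurableSet_le measurable_const (measurable_pi_apply i)).inter
      (measurableSet_le (measurable_pi_apply i) measurable_const)

def cell (k : Fin p → Fin (n+1)) : Set (Fin p → ℝ) :=
  {x | ∀ i, ⌊(n:ℝ) * x i⌋ = ((k i : ℕ) : ℤ)}

lemma cell_meas (k : Fin p → Fin (n+1)) : MeasurableSet (cell p n k) := by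
  have : cell p n k = ⋂ i, (fun x : Fin p → ℝ => ⌊(n:ℝ) * x i⌋) ⁻¹' {((k i : ℕ) : ℤ)} := by
    ext x; simp [cell, Set.mem_iInter]
  rw [this]
  exact MeasurableSet.iInter fun i =>
    ((measurable_const.mul (measurable_pi_apply i)).floor) (measurableSet_singleton _)

noncomputable def phi0 (c : (Fin p → Fin (n+1)) → ℝ) : (Fin p → ℝ) → ℝ :=
  fun x => ∑ k : Fin p → Fin (n+1), Set.indicator (cell p n k) (fun _ => c k) x

lemma phi0_meas (c : (Fin p → Fin (n+1)) → ℝ) : Measurable (phi0 p n c) := by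
  apply Finset.measurable_sum
  intro k _
  exact measurable_const.indicator (cell_meas p n k)

lemma phi0_memLp (c : (Fin p → Fin (n+1)) → ℝ) : MemLp (phi0 p n c) 2 (nuMeas p) := by
  apply MemLp.of_bound ((phi0_meas p n c).aestronglyMeasurable)
    (∑ k : Fin p → Fin (n+1), |c k|)
  apply Filter.Eventually.of_forall
  intro x
  rw [Real.norm_eq_abs]
  refine le_trans (Finset.abs_sum_le_sum_abs _ _) (Finset.sum_le_sum fun k _ => ?_)
  by_cases hx : x ∈ cell p n k
  · simp [Set.indicator_of_mem hx]
  · simp [Set.indicator_of_notMem hx, abs_nonneg]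

noncomputable def PhiL : ((Fin p → Fin (n+1)) → ℝ) →ₗ[ℝ] Lp ℝ 2 (nuMeas p) where
  toFun c := (phi0_memLp p n c).toLp (phi0 p n c)
  map_add' c c' := by
    have h : phi0 p n (c + c') = phi0 p n c + phi0 p n c' := by
      funext x
      simp only [phi0, Pi.add_apply, ← Finset.sum_add_distrib]
      refine Finset.sum_congr rfl fun k _ => ?_
      by_cases hx : x ∈ cell p n k
      · simp [Set.indicator_of_mem hx]
      · simp [Set.indicator_of_notMem hx]
    rw [← MemLp.toLp_add (phi0_memLp p n c) (phi0_memLp p n c')]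
    exact MemLp.toLp_congr (phi0_memLp p n (c + c')) _ (Filter.EventuallyEq.of_eq h)
  map_smul' a c := by
    have h : phi0 p n (a • c) = a • phi0 p n c := by
      funext x
      simp only [phi0, Pi.smul_apply, smul_eq_mul, Finset.mul_sum]
      refine Finset.sum_congr rfl fun k _ => ?_
      by_cases hx : x ∈ cell p n k
      · simp [Set.indicator_of_mem hx]
      · simp [Set.indicator_of_notMem hx]
    rw [RingHom.id_apply, ← MemLp.toLp_const_smul]
    exact MemLp.toLp_congr (phi0_memLp p n (a • c)) _ (Filter.EventuallyEq.of_eq h)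

end Grid

lemma boundary_null (p : ℕ) : nuMeas p {x : Fin p → ℝ | ¬ ∀ i, 0 ≤ x i ∧ x i ≤ 1} = 0 := by
  have hsub : {x : Fin p → ℝ | ¬ ∀ i, 0 ≤ x i ∧ x i ≤ 1} ⊆
      ⋃ i, Function.eval i ⁻¹' (Set.Icc (0:ℝ) 1)ᶜ := by
    intro x hx
    push_neg at hx
    obtain ⟨i, hi⟩ := hx
    refine Set.mem_iUnion.mpr ⟨i, ?_⟩
    simp only [Set.mem_preimage, Set.mem_compl_iff, Set.mem_Icc, Function.eval]
    intro h; exact absurd h.2 (not_le.mpr (hi h.1))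
  refine measure_mono_null hsub (measure_iUnion_null fun i => ?_)
  rw [nuMeas_eval_preimage]
  have h1 : (volume.restrict (Set.Icc (0:ℝ) 1)) (Set.Icc (0:ℝ) 1)ᶜ = 0 := by
    rw [Measure.restrict_apply (measurableSet_Icc.compl)]
    simp
  have h2 : (Measure.dirac (0:ℝ)) (Set.Icc (0:ℝ) 1)ᶜ = 0 := by
    rw [Measure.dirac_apply' _ measurableSet_Icc.compl]
    simp
  have h3 : (Measure.dirac (1:ℝ)) (Set.Icc (0:ℝ) 1)ᶜ = 0 := by
    rw [Measure.dirac_apply' _ measurableSet_Icc.compl]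
    simp
  simp [nu1, Measure.smul_apply, h1, h2, h3]

lemma phi0_eval (p n : ℕ) (hn : 0 < n) (F : (Fin p → ℝ) → ℝ) (x : Fin p → ℝ)
    (hx : ∀ i, 0 ≤ x i ∧ x i ≤ 1) :
    phi0 p n (fun k => F (fun i => ((k i : ℕ) : ℝ)/n)) x
      = F (fun i => (⌊(n:ℝ) * x i⌋ : ℝ)/n) := by
  have hnn : ∀ i, 0 ≤ ⌊(n:ℝ) * x i⌋ := fun i =>
    Int.floor_nonneg.mpr (mul_nonneg (Nat.cast_nonneg n) (hx i).1)
  have hub : ∀ i, (⌊(n:ℝ) * x i⌋).toNat < n + 1 := by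
    intro i
    have h1 : (n:ℝ) * x i ≤ n := mul_le_of_le_one_right (Nat.cast_nonneg n) (hx i).2
    have h2 : ⌊(n:ℝ) * x i⌋ ≤ (n:ℤ) := by
      have := Int.floor_le_floor h1
      rwa [Int.floor_natCast] at this
    omega
  set kx : Fin p → Fin (n+1) := fun i => ⟨(⌊(n:ℝ) * x i⌋).toNat, hub i⟩ with hkx
  have hmem : x ∈ cell p n kx := by
    intro i
    simp only [hkx]
    rw [Int.toNat_of_nonneg (hnn i)]
  have hcast : ∀ i, ((kx i : ℕ) : ℝ) = (⌊(n:ℝ) * x i⌋ : ℝ) := by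
    intro i
    simp only [hkx]
    rw [← Int.cast_natCast, Int.toNat_of_nonneg (hnn i)]
  rw [phi0, Finset.sum_eq_single kx]
  · rw [Set.indicator_of_mem hmem]
    congr 1
    funext i
    rw [hcast i]
  · intro k _ hk
    rw [Set.indicator_of_notMem]
    intro hxk
    apply hk
    funext i
    have h1 : ((k i : ℕ) : ℤ) = ((kx i : ℕ) : ℤ) := by
      rw [← hxk i, ← hmem i]
    exact Fin.ext (by exact_mod_cast h1)
  · intro h; exact absurd (Finset.mem_univ kx) h

lemma key_estimate (p n : ℕ) (hn : 0 < n) (μ : SignedMeasure (Fin p → ℝ)) (C : ℝ≥0∞)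
    (hTV : μ.totalVariation Set.univ ≤ C) :
    eLpNorm (fun x => μ (Qset p x)
        - phi0 p n (fun k => μ (Qset p (fun i => ((k i : ℕ) : ℝ)/n))) x) 2 (nuMeas p)
      ≤ (C * ((p : ℝ≥0∞) * (ENNReal.ofReal (1/n) * C))) ^ (1/2 : ℝ) := by
  set m := μ.totalVariation with hm
  set gg : (Fin p → ℝ) → (Fin p → ℝ) := fun x i => (⌊(n:ℝ) * x i⌋ : ℝ)/n with hgg
  set d : (Fin p → ℝ) → ℝ := fun x => μ (Qset p x)
      - phi0 p n (fun k => μ (Qset p (fun i => ((k i : ℕ) : ℝ)/n))) x with hd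
  set s : Set ((Fin p → ℝ) × (Fin p → ℝ)) :=
    {q | q.2 ∈ Qset p q.1 ∧ q.2 ∉ Qset p (gg q.1)} with hsdef
  -- measurability of s
  have hs1 : MeasurableSet {q : (Fin p → ℝ) × (Fin p → ℝ) | q.2 ∈ Qset p q.1} := by
    have he : {q : (Fin p → ℝ) × (Fin p → ℝ) | q.2 ∈ Qset p q.1}
        = ⋂ i, ({q : (Fin p → ℝ) × (Fin p → ℝ) | 0 ≤ q.2 i} ∩ {q | q.2 i ≤ q.1 i}) := by
      ext q; simp [Qset, Set.mem_iInter, forall_and]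
    rw [he]
    exact MeasurableSet.iInter fun i =>
      (measurableSet_le measurable_const measurable_snd.eval).inter
        (measurableSet_le measurable_snd.eval
          measurable_fst.eval)
  have hs2 : MeasurableSet {q : (Fin p → ℝ) × (Fin p → ℝ) | q.2 ∈ Qset p (gg q.1)} := by
    have he : {q : (Fin p → ℝ) × (Fin p → ℝ) | q.2 ∈ Qset p (gg q.1)}
        = ⋂ i, ({q : (Fin p → ℝ) × (Fin p → ℝ) | 0 ≤ q.2 i} ∩ {q | q.2 i ≤ gg q.1 i}) := by
      ext q; simp [Qset, Set.mem_iInter, forall_and]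
    rw [he]
    exact MeasurableSet.iInter fun i =>
      (measurableSet_le measurable_const measurable_snd.eval).inter
        (measurableSet_le measurable_snd.eval
          ((gfun_measurable n).comp measurable_fst.eval))
  have hs : MeasurableSet s := hs1.inter hs2.compl
  -- pointwise bound
  have hnR : (0:ℝ) < n := Nat.cast_pos.mpr hn
  have hae : ∀ᵐ x ∂(nuMeas p), (‖d x‖₊ : ℝ≥0∞) ≤ m (Prod.mk x ⁻¹' s) := by
    filter_upwards [(MeasureTheory.ae_iff).mpr (boundary_null p)] with x hx
    have hggx : ∀ i, 0 ≤ gg x i ∧ gg x i ≤ x i := by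
      intro i
      constructor
      · apply div_nonneg _ (le_of_lt hnR)
        exact_mod_cast Int.floor_nonneg.mpr (mul_nonneg (le_of_lt hnR) (hx i).1)
      · rw [div_le_iff₀ hnR]
        calc ((⌊(n:ℝ) * x i⌋ : ℝ)) ≤ (n:ℝ) * x i := Int.floor_le _
          _ = x i * n := mul_comm _ _
    have hQsub : Qset p (gg x) ⊆ Qset p x := fun y hy i =>
      ⟨(hy i).1, le_trans (hy i).2 (hggx i).2⟩
    have hphi : phi0 p n (fun k => μ (Qset p (fun i => ((k i : ℕ) : ℝ)/n))) x
        = μ (Qset p (gg x)) := phi0_eval p n hn (fun z => μ (Qset p z)) x hx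
    have hdiff : μ (Qset p x \ Qset p (gg x)) = μ (Qset p x) - μ (Qset p (gg x)) :=
      MeasureTheory.VectorMeasure.of_diff (Qset_meas p (gg x)) (Qset_meas p x) hQsub
    have hpre : Prod.mk x ⁻¹' s = Qset p x \ Qset p (gg x) := by
      ext y; simp [hsdef, Set.mem_diff]
    have habs : |d x| ≤ (m (Qset p x \ Qset p (gg x))).toReal := by
      rw [hd]
      simp only [hphi, ← hdiff]
      exact sm_abs_le μ ((Qset_meas p x).diff (Qset_meas p (gg x)))
    calc (‖d x‖₊ : ℝ≥0∞) = ENNReal.ofReal |d x| := Real.enorm_eq_ofReal_abs _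
      _ ≤ ENNReal.ofReal ((m (Qset p x \ Qset p (gg x))).toReal) :=
          ENNReal.ofReal_le_ofReal habs
      _ = m (Qset p x \ Qset p (gg x)) := ENNReal.ofReal_toReal (measure_ne_top _ _)
      _ = m (Prod.mk x ⁻¹' s) := by rw [hpre]
  -- the measure of s under the product measure
  have hmCs : m Set.univ ≤ C := hTV
  have hprod : ((nuMeas p).prod m) s ≤ (p : ℝ≥0∞) * (ENNReal.ofReal (1/n) * C) := by
    set si : Fin p → Set ((Fin p → ℝ) × (Fin p → ℝ)) :=
      fun i => {q | (⌊(n:ℝ) * q.1 i⌋ : ℝ)/n < q.2 i ∧ q.2 i ≤ q.1 i} with hsi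
    have hsim : ∀ i, MeasurableSet (si i) := by
      intro i
      have he : si i = {q : (Fin p → ℝ) × (Fin p → ℝ) | (⌊(n:ℝ) * q.1 i⌋ : ℝ)/n < q.2 i}
          ∩ {q | q.2 i ≤ q.1 i} := by ext q; simp [hsi]
      rw [he]
      exact (measurableSet_lt ((gfun_measurable n).comp
          measurable_fst.eval)
          measurable_snd.eval).inter
        (measurableSet_le measurable_snd.eval
          measurable_fst.eval)
    have hsub : s ⊆ ⋃ i, si i := by
      rintro ⟨x, y⟩ ⟨hy1, hy2⟩
      simp only [Qset, Set.mem_setOf_eq] at hy1 hy2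
      push_neg at hy2
      obtain ⟨i, hi⟩ := hy2
      exact Set.mem_iUnion.mpr ⟨i, ⟨hi (hy1 i).1, (hy1 i).2⟩⟩
    calc ((nuMeas p).prod m) s ≤ ((nuMeas p).prod m) (⋃ i, si i) := measure_mono hsub
      _ ≤ ∑' i, ((nuMeas p).prod m) (si i) := measure_iUnion_le _
      _ = ∑ i, ((nuMeas p).prod m) (si i) := tsum_fintype _
      _ ≤ ∑ i : Fin p, ENNReal.ofReal (1/n) * C := by
          refine Finset.sum_le_sum fun i _ => ?_
          rw [Measure.prod_apply_symm (hsim i)]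
          have hsec : ∀ y : Fin p → ℝ, ((fun x => (x, y)) ⁻¹' si i)
              = Function.eval i ⁻¹' {t : ℝ | ((⌊(n:ℝ) * t⌋ : ℝ)/n < y i ∧ y i ≤ t)} := by
            intro y; ext x; simp [hsi, Function.eval]
          calc ∫⁻ y, (nuMeas p) ((fun x => (x, y)) ⁻¹' si i) ∂m
              ≤ ∫⁻ _, ENNReal.ofReal (1/n) ∂m := by
                refine lintegral_mono fun y => ?_
                rw [hsec y, nuMeas_eval_preimage]
                exact nu1_strip n hn (y i)
            _ = ENNReal.ofReal (1/n) * m Set.univ := lintegral_const _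
            _ ≤ ENNReal.ofReal (1/n) * C := by gcongr
      _ = (p : ℝ≥0∞) * (ENNReal.ofReal (1/n) * C) := by
          rw [Finset.sum_const, Finset.card_univ, Fintype.card_fin, nsmul_eq_mul]
  -- put it together
  have hrw2 : ∀ a : ℝ≥0∞, a ^ (2:ℝ) = a * a := fun a => by
    rw [show (2:ℝ) = ((2:ℕ):ℝ) by norm_num, ENNReal.rpow_natCast, sq]
  rw [eLpNorm_eq_lintegral_rpow_enorm_toReal (by norm_num) (by norm_num)]
  have htoReal : (2 : ℝ≥0∞).toReal = (2:ℝ) := by simp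
  rw [htoReal]
  refine ENNReal.rpow_le_rpow ?_ (by norm_num)
  calc ∫⁻ x, (‖d x‖₊ : ℝ≥0∞) ^ (2:ℝ) ∂(nuMeas p)
      ≤ ∫⁻ x, C * m (Prod.mk x ⁻¹' s) ∂(nuMeas p) := by
        refine lintegral_mono_ae ?_
        filter_upwards [hae] with x hx
        rw [hrw2]
        exact mul_le_mul' (le_trans hx (le_trans (measure_mono (Set.subset_univ _)) hmCs)) hx
    _ = C * ∫⁻ x, m (Prod.mk x ⁻¹' s) ∂(nuMeas p) :=
        lintegral_const_mul C (measurable_measure_prodMk_left hs)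
    _ = C * ((nuMeas p).prod m) s := by rw [Measure.prod_apply hs]
    _ ≤ C * ((p : ℝ≥0∞) * (ENNReal.ofReal (1/n) * C)) := by gcongr

/-- Any subset of the space `𝕋` of tree functions (functions `x ↦ μ([0,x])` for finite
signed measures `μ` supported in `[0,1)^p`), viewed inside `L²([0,1]^p, ν)`, which is
bounded in total variation norm is relatively compact in `L²`. -/
theorem treeFunctions_boundedTV_relativelyCompact (p : ℕ)
    (S : Set (Lp ℝ 2 (nuMeas p))) (C : ℝ≥0∞) (hC : C < ⊤)
    (hS : ∀ f ∈ S, ∃ μ : SignedMeasure (Fin p → ℝ),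
      μ.totalVariation {x | ∀ i, 0 ≤ x i ∧ x i < 1}ᶜ = 0 ∧
      μ.totalVariation Set.univ ≤ C ∧
      (⇑f) =ᵐ[nuMeas p] fun x => μ {y | ∀ i, 0 ≤ y i ∧ y i ≤ x i}) :
    IsCompact (closure S) := by
  refine TotallyBounded.isCompact_of_isClosed (TotallyBounded.closure ?_) isClosed_closure
  apply totallyBounded_of_compact_approx
  intro ε hε
  set Cr := C.toReal with hCr
  have hCr0 : 0 ≤ Cr := ENNReal.toReal_nonneg
  obtain ⟨n, hngt⟩ := exists_nat_gt (max 1 ((p : ℝ) * (Cr * Cr) / (ε * ε)))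
  have hn1R : (1:ℝ) < n := lt_of_le_of_lt (le_max_left _ _) hngt
  have hn : 0 < n := by exact_mod_cast lt_trans zero_lt_one hn1R
  have hnR : (0:ℝ) < n := Nat.cast_pos.mpr hn
  refine ⟨(PhiL p n) '' (Set.Icc (fun _ => -Cr) (fun _ => Cr)), ?_, ?_⟩
  · exact (isCompact_Icc).image (PhiL p n).continuous_of_finiteDimensional
  intro f hf
  obtain ⟨μ, hsupp, hTV, hae⟩ := hS f hf
  set v : (Fin p → Fin (n+1)) → ℝ :=
    fun k => μ (Qset p (fun i => ((k i : ℕ) : ℝ)/n)) with hv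
  have habs : ∀ k, |v k| ≤ Cr := by
    intro k
    calc |v k| ≤ (μ.totalVariation (Qset p (fun i => ((k i : ℕ) : ℝ)/n))).toReal :=
          sm_abs_le μ (Qset_meas p _)
      _ ≤ (μ.totalVariation Set.univ).toReal :=
          ENNReal.toReal_mono (measure_ne_top _ _) (measure_mono (Set.subset_univ _))
      _ ≤ Cr := ENNReal.toReal_mono hC.ne hTV
  have hvmem : v ∈ Set.Icc (fun _ => -Cr) (fun _ => Cr) := by
    rw [Set.mem_Icc]
    constructor <;> (rw [Pi.le_def]; intro k)
    · have := habs k; rw [abs_le] at this; exact this.1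
    · have := habs k; rw [abs_le] at this; exact this.2
  refine ⟨PhiL p n v, Set.mem_image_of_mem _ hvmem, ?_⟩
  rw [dist_eq_norm, Lp.norm_def]
  apply ENNReal.toReal_le_of_le_ofReal hε.le
  have hPhicoe : ⇑(PhiL p n v) =ᵐ[nuMeas p] phi0 p n v :=
    MemLp.coeFn_toLp (phi0_memLp p n v)
  have hcoe : ⇑(f - PhiL p n v) =ᵐ[nuMeas p]
      fun x => μ (Qset p x) - phi0 p n v x := by
    filter_upwards [Lp.coeFn_sub f (PhiL p n v), hae, hPhicoe] with x h1 h2 h3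
    rw [h1, Pi.sub_apply, h3, h2]
    rfl
  rw [eLpNorm_congr_ae hcoe]
  refine le_trans (key_estimate p n hn μ C hTV) ?_
  have hCeq : C = ENNReal.ofReal Cr := (ENNReal.ofReal_toReal hC.ne).symm
  have hBeq : C * ((p : ℝ≥0∞) * (ENNReal.ofReal (1/n) * C))
      = ENNReal.ofReal (Cr * ((p:ℝ) * (1/n * Cr))) := by
    rw [hCeq, ENNReal.ofReal_mul hCr0, ENNReal.ofReal_mul (by positivity),
      ENNReal.ofReal_mul (by positivity), ENNReal.ofReal_natCast]
  rw [hBeq]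
  have hnum : Cr * ((p:ℝ) * (1/n * Cr)) ≤ ε * ε := by
    have h1 : (p : ℝ) * (Cr * Cr) / (ε * ε) < n := lt_of_le_of_lt (le_max_right _ _) hngt
    have h2 : (0:ℝ) < ε * ε := by positivity
    rw [div_lt_iff₀ h2] at h1
    have heq : Cr * ((p:ℝ) * (1/n * Cr)) = ((p:ℝ) * (Cr * Cr))/n := by
      field_simp
    rw [heq, div_le_iff₀ hnR]
    nlinarith
  refine le_trans (ENNReal.rpow_le_rpow (ENNReal.ofReal_le_ofReal hnum) (by norm_num)) ?_
  rw [ENNReal.ofReal_mul hε.le]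
  rw [show ENNReal.ofReal ε * ENNReal.ofReal ε = (ENNReal.ofReal ε) ^ (2:ℝ) from by
    rw [show (2:ℝ) = ((2:ℕ):ℝ) by norm_num, ENNReal.rpow_natCast, sq]]
  rw [← ENNReal.rpow_mul]
  norm_num
end

section
/- Let T, T_1, T_2, … be elements of 𝕋⁺ (tree functions with nonnegative associated measure) such that T is continuous on [0,1]^p. If T_n → T in L²([0,1]^p, ν), then T_n → T uniformly on [0,1]^p. -/
open MeasureTheory
open scoped ENNReal

private lemma nuMeas_factor_lb {η : ℝ} (hη0 : 0 < η) (hη1 : η ≤ 1) {a b : ℝ}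
    (ha : 0 ≤ a) (hab : a ≤ b) (hb : b ≤ 1)
    (h : η ≤ b - a ∨ a = 0 ∨ b = 1) :
    (3 : ℝ≥0∞)⁻¹ * ENNReal.ofReal η ≤
      ((3 : ℝ≥0∞)⁻¹ • (volume.restrict (Set.Icc (0 : ℝ) 1)
        + Measure.dirac (0 : ℝ) + Measure.dirac (1 : ℝ))) (Set.Icc a b) := by
  rw [Measure.smul_apply, smul_eq_mul, Measure.add_apply, Measure.add_apply]
  refine mul_le_mul_right ?_ _
  rcases h with h | h | h
  · have hA : ENNReal.ofReal η ≤ volume.restrict (Set.Icc (0:ℝ) 1) (Set.Icc a b) := by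
      rw [Measure.restrict_apply measurableSet_Icc,
        Set.inter_eq_self_of_subset_left (Set.Icc_subset_Icc ha hb), Real.volume_Icc]
      exact ENNReal.ofReal_le_ofReal h
    exact le_trans hA (le_trans (self_le_add_right _ _) (self_le_add_right _ _))
  · have hB : Measure.dirac (0:ℝ) (Set.Icc a b) = 1 :=
      Measure.dirac_apply_of_mem (by subst h; exact ⟨le_refl _, hab⟩)
    calc ENNReal.ofReal η ≤ 1 := ENNReal.ofReal_le_one.mpr hη1
      _ = Measure.dirac (0:ℝ) (Set.Icc a b) := hB.symm
      _ ≤ _ := le_trans (self_le_add_left _ _) (self_le_add_right _ _)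
  · have hC : Measure.dirac (1:ℝ) (Set.Icc a b) = 1 :=
      Measure.dirac_apply_of_mem (by subst h; exact ⟨hab, le_refl _⟩)
    calc ENNReal.ofReal η ≤ 1 := ENNReal.ofReal_le_one.mpr hη1
      _ = Measure.dirac (1:ℝ) (Set.Icc a b) := hC.symm
      _ ≤ _ := self_le_add_left _ _

private lemma nuMeas_key (p : ℕ) (f : (Fin p → ℝ) → ℝ) {η : ℝ} (hη0 : 0 < η) (hη1 : η ≤ 1)
    (a b : Fin p → ℝ) (ha : ∀ i, 0 ≤ a i) (hab : ∀ i, a i ≤ b i) (hb : ∀ i, b i ≤ 1)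
    (hlen : ∀ i, η ≤ b i - a i ∨ a i = 0 ∨ b i = 1)
    (s : ℝ) (hs : ∀ y ∈ Set.pi Set.univ (fun i => Set.Icc (a i) (b i)), s ≤ |f y|) :
    ENNReal.ofReal s ^ 2 * ((3 : ℝ≥0∞)⁻¹ * ENNReal.ofReal η) ^ p ≤
      ∫⁻ x, (‖f x‖₊ : ℝ≥0∞) ^ 2 ∂(nuMeas p) := by
  set Q := Set.pi Set.univ (fun i => Set.Icc (a i) (b i)) with hQdef
  have hQm : MeasurableSet Q := MeasurableSet.univ_pi fun i => measurableSet_Icc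
  haveI : ∀ _i : Fin p, IsFiniteMeasure ((3 : ℝ≥0∞)⁻¹ • (volume.restrict (Set.Icc (0 : ℝ) 1)
      + Measure.dirac (0 : ℝ) + Measure.dirac (1 : ℝ))) := by
    intro _i
    constructor
    rw [Measure.smul_apply, smul_eq_mul, Measure.add_apply, Measure.add_apply]
    refine ENNReal.mul_lt_top (by simp) ?_
    refine ENNReal.add_lt_top.mpr ⟨ENNReal.add_lt_top.mpr ⟨?_, ?_⟩, ?_⟩
    · rw [Measure.restrict_apply_univ]; exact measure_Icc_lt_top
    · simp
    · simp
  have hν : ((3 : ℝ≥0∞)⁻¹ * ENNReal.ofReal η) ^ p ≤ nuMeas p Q := by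
    rw [nuMeas, Measure.pi_pi]
    have : ((3 : ℝ≥0∞)⁻¹ * ENNReal.ofReal η) ^ p = ∏ _i : Fin p, ((3 : ℝ≥0∞)⁻¹ * ENNReal.ofReal η) := by
      simp [Finset.prod_const]
    rw [this]
    exact Finset.prod_le_prod' fun i _ =>
      nuMeas_factor_lb hη0 hη1 (ha i) (hab i) (hb i) (hlen i)
  calc ENNReal.ofReal s ^ 2 * ((3 : ℝ≥0∞)⁻¹ * ENNReal.ofReal η) ^ p
      ≤ ENNReal.ofReal s ^ 2 * nuMeas p Q := mul_le_mul_right hν _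
    _ = ∫⁻ _ in Q, ENNReal.ofReal s ^ 2 ∂(nuMeas p) := (setLIntegral_const _ _).symm
    _ ≤ ∫⁻ y in Q, (‖f y‖₊ : ℝ≥0∞) ^ 2 ∂(nuMeas p) := by
        refine lintegral_mono_ae (ae_restrict_of_forall_mem hQm fun y hy => ?_)
        have h1 : ENNReal.ofReal s ≤ (‖f y‖₊ : ℝ≥0∞) := by
          rw [← enorm_eq_nnnorm, Real.enorm_eq_ofReal_abs]
          exact ENNReal.ofReal_le_ofReal (hs y hy)
        exact pow_le_pow_left₀ zero_le h1 2
    _ ≤ ∫⁻ y, (‖f y‖₊ : ℝ≥0∞) ^ 2 ∂(nuMeas p) := setLIntegral_le_lintegral _ _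

/-- Pólya-type theorem for tree functions with nonnegative measure: if `T, T_1, T_2, …`
are tree functions in `𝕋⁺` (i.e. `T_n(x) = μ_n([0,x])` for finite nonnegative measures
`μ_n` supported in `[0,1)^p`), `T` is continuous on `[0,1]^p`, and `T_n → T` in
`L²([0,1]^p, ν)`, then `T_n → T` uniformly on `[0,1]^p`. -/
theorem treePlus_L2_tendsto_implies_uniform (p : ℕ)
    (T : (Fin p → ℝ) → ℝ) (Tn : ℕ → (Fin p → ℝ) → ℝ)
    (μ : Measure (Fin p → ℝ)) (μn : ℕ → Measure (Fin p → ℝ))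
    [IsFiniteMeasure μ] (hfin : ∀ n, IsFiniteMeasure (μn n))
    (hμ : μ {x | ∀ i, 0 ≤ x i ∧ x i < 1}ᶜ = 0)
    (hμn : ∀ n, μn n {x | ∀ i, 0 ≤ x i ∧ x i < 1}ᶜ = 0)
    (hT : ∀ x : Fin p → ℝ, (∀ i, x i ∈ Set.Icc (0 : ℝ) 1) →
      T x = (μ {y | ∀ i, 0 ≤ y i ∧ y i ≤ x i}).toReal)
    (hTn : ∀ n, ∀ x : Fin p → ℝ, (∀ i, x i ∈ Set.Icc (0 : ℝ) 1) →
      Tn n x = (μn n {y | ∀ i, 0 ≤ y i ∧ y i ≤ x i}).toReal)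
    (hcont : ContinuousOn T {x | ∀ i, x i ∈ Set.Icc (0 : ℝ) 1})
    (hL2 : Filter.Tendsto (fun n => eLpNorm (fun x => Tn n x - T x) 2 (nuMeas p))
      Filter.atTop (nhds 0)) :
    TendstoUniformlyOn Tn T Filter.atTop {x | ∀ i, x i ∈ Set.Icc (0 : ℝ) 1} := by
  classical
  -- monotonicity of the Tn
  have hmono : ∀ n, ∀ u v : Fin p → ℝ, (∀ i, u i ∈ Set.Icc (0:ℝ) 1) →
      (∀ i, v i ∈ Set.Icc (0:ℝ) 1) → (∀ i, u i ≤ v i) → Tn n u ≤ Tn n v := by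
    intro n u v hu hv huv
    rw [hTn n u hu, hTn n v hv]
    haveI := hfin n
    exact ENNReal.toReal_mono (measure_ne_top _ _)
      (measure_mono fun y hy i => ⟨(hy i).1, le_trans (hy i).2 (huv i)⟩)
  -- compactness and uniform continuity
  have hScomp : IsCompact {x : Fin p → ℝ | ∀ i, x i ∈ Set.Icc (0:ℝ) 1} := by
    have : {x : Fin p → ℝ | ∀ i, x i ∈ Set.Icc (0:ℝ) 1} = Set.Icc (0 : Fin p → ℝ) 1 := by
      ext x
      simp [Set.mem_Icc, Pi.le_def, forall_and, Set.mem_setOf_eq]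
    rw [this]
    exact isCompact_Icc
  have hUC := Metric.uniformContinuousOn_iff.mp
    (hScomp.uniformContinuousOn_of_continuous hcont)
  rw [Metric.tendstoUniformlyOn_iff]
  intro ε hε
  obtain ⟨δ, hδpos, hδ'⟩ := hUC (ε/4) (by positivity)
  set η : ℝ := min (δ/2) 1 with hηdef
  have hη0 : 0 < η := lt_min (half_pos hδpos) one_pos
  have hη1 : η ≤ 1 := min_le_right _ _
  set c : ℝ≥0∞ := ((3 : ℝ≥0∞)⁻¹ * ENNReal.ofReal η) ^ p with hcdef
  have hc0 : c ≠ 0 := by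
    apply pow_ne_zero
    exact mul_ne_zero (by simp) (ENNReal.ofReal_pos.mpr hη0).ne'
  have hcT : c ≠ ⊤ := by
    apply ENNReal.pow_ne_top
    exact ENNReal.mul_ne_top (by simp) ENNReal.ofReal_ne_top
  -- L² hypothesis in lintegral form
  have hEeq : ∀ n, (∫⁻ x, (‖Tn n x - T x‖₊ : ℝ≥0∞) ^ 2 ∂(nuMeas p)) =
      (eLpNorm (fun x => Tn n x - T x) 2 (nuMeas p)) ^ 2 := by
    intro n
    rw [eLpNorm_eq_lintegral_rpow_enorm_toReal two_ne_zero ENNReal.ofNat_ne_top]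
    simp only [ENNReal.toReal_ofNat]
    rw [← ENNReal.rpow_natCast (_ ^ (1/(2:ℝ))) 2, ← ENNReal.rpow_mul]
    norm_num
    rfl
  have hE : Filter.Tendsto (fun n => ∫⁻ x, (‖Tn n x - T x‖₊ : ℝ≥0∞) ^ 2 ∂(nuMeas p))
      Filter.atTop (nhds 0) := by
    have h2 := ((ENNReal.continuous_pow 2).tendsto (0:ℝ≥0∞)).comp hL2
    simp only [Function.comp_def] at h2
    simp only [hEeq]
    simpa using h2
  have hev : ∀ᶠ n in Filter.atTop,
      (∫⁻ x, (‖Tn n x - T x‖₊ : ℝ≥0∞) ^ 2 ∂(nuMeas p)) < ENNReal.ofReal (ε/4) ^ 2 * c := by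
    refine hE.eventually_lt_const ?_
    refine (zero_lt_iff).mpr (mul_ne_zero (pow_ne_zero _ ?_) hc0)
    exact (ENNReal.ofReal_pos.mpr (by positivity)).ne'
  filter_upwards [hev] with n hn x hx
  have hxS : ∀ i, x i ∈ Set.Icc (0:ℝ) 1 := hx
  -- generic derivation of a bound from the key lemma
  have hder : ∀ s : ℝ, ENNReal.ofReal s ^ 2 * c ≤
      (∫⁻ x, (‖Tn n x - T x‖₊ : ℝ≥0∞) ^ 2 ∂(nuMeas p)) → s < ε/4 := by
    intro s hle
    have h1 : ENNReal.ofReal s ^ 2 * c < ENNReal.ofReal (ε/4) ^ 2 * c := lt_of_le_of_lt hle hn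
    have h2 : ENNReal.ofReal s ^ 2 < ENNReal.ofReal (ε/4) ^ 2 :=
      (ENNReal.mul_lt_mul_iff_left hc0 hcT).mp h1
    have h3 : ENNReal.ofReal s < ENNReal.ofReal (ε/4) := by
      by_contra hcon
      push_neg at hcon
      exact absurd (pow_le_pow_left₀ zero_le hcon 2) (not_le.mpr h2)
    exact (ENNReal.ofReal_lt_ofReal_iff (by positivity)).mp h3
  -- upper box
  have hplus : Tn n x - T x - ε/4 < ε/4 := by
    refine hder _ (nuMeas_key p (fun y => Tn n y - T y) hη0 hη1 x
      (fun i => min (x i + η) 1) (fun i => (hx i).1)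
      (fun i => le_min (le_add_of_nonneg_right hη0.le) (hx i).2)
      (fun i => min_le_right _ _) ?_ _ ?_)
    · intro i
      rcases le_or_gt (x i + η) 1 with h | h
      · left; show η ≤ min (x i + η) 1 - x i; rw [min_eq_left h]; linarith
      · right; right; show min (x i + η) 1 = 1; exact min_eq_right h.le
    · intro y hy
      have hy' : ∀ i, y i ∈ Set.Icc (x i) (min (x i + η) 1) := fun i => hy i (Set.mem_univ i)
      have hyS : ∀ i, y i ∈ Set.Icc (0:ℝ) 1 :=
        fun i => ⟨le_trans (hx i).1 (hy' i).1, le_trans (hy' i).2 (min_le_right _ _)⟩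
      have h1 : Tn n x ≤ Tn n y := hmono n x y hxS hyS fun i => (hy' i).1
      have hdist : dist y x < δ := by
        refine (dist_pi_lt_iff hδpos).mpr fun i => ?_
        rw [Real.dist_eq]
        have ha1 : y i - x i ≤ η := by
          have := le_trans (hy' i).2 (min_le_left _ _); linarith
        have ha2 : 0 ≤ y i - x i := by linarith [(hy' i).1]
        have : |y i - x i| ≤ η := abs_le.mpr ⟨by linarith, ha1⟩
        calc |y i - x i| ≤ η := this
          _ ≤ δ/2 := min_le_left _ _
          _ < δ := half_lt_self hδpos
      have h2 : |T y - T x| < ε/4 := by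
        have := hδ' y hyS x hxS hdist
        rwa [Real.dist_eq] at this
      have h2' := abs_lt.mp h2
      calc Tn n x - T x - ε/4 ≤ Tn n y - T y := by linarith [h2'.2]
        _ ≤ |Tn n y - T y| := le_abs_self _
  -- lower box
  have hminus : T x - Tn n x - ε/4 < ε/4 := by
    refine hder _ (nuMeas_key p (fun y => Tn n y - T y) hη0 hη1
      (fun i => max (x i - η) 0) x (fun i => le_max_right _ _)
      (fun i => max_le (by linarith [hη0.le]) (hx i).1) (fun i => (hx i).2) ?_ _ ?_)
    · intro i
      rcases le_or_gt 0 (x i - η) with h | h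
      · left; show η ≤ x i - max (x i - η) 0; rw [max_eq_left h]; linarith
      · right; left; show max (x i - η) 0 = 0; exact max_eq_right h.le
    · intro y hy
      have hy' : ∀ i, y i ∈ Set.Icc (max (x i - η) 0) (x i) := fun i => hy i (Set.mem_univ i)
      have hyS : ∀ i, y i ∈ Set.Icc (0:ℝ) 1 :=
        fun i => ⟨le_trans (le_max_right _ _) (hy' i).1, le_trans (hy' i).2 (hx i).2⟩
      have h1 : Tn n y ≤ Tn n x := hmono n y x hyS hxS fun i => (hy' i).2
      have hdist : dist y x < δ := by
        refine (dist_pi_lt_iff hδpos).mpr fun i => ?_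
        rw [Real.dist_eq]
        have ha1 : x i - η ≤ y i := le_trans (le_max_left _ _) (hy' i).1
        have ha2 : y i ≤ x i := (hy' i).2
        have : |y i - x i| ≤ η := abs_le.mpr ⟨by linarith, by linarith⟩
        calc |y i - x i| ≤ η := this
          _ ≤ δ/2 := min_le_left _ _
          _ < δ := half_lt_self hδpos
      have h2 : |T y - T x| < ε/4 := by
        have := hδ' y hyS x hxS hdist
        rwa [Real.dist_eq] at this
      have h2' := abs_lt.mp h2
      calc T x - Tn n x - ε/4 ≤ T y - Tn n y := by linarith [h2'.1]
        _ = -(Tn n y - T y) := by ring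
        _ ≤ |Tn n y - T y| := neg_le_abs _
  rw [Real.dist_eq, abs_sub_lt_iff]
  constructor <;> linarith
end

section
/- Let L: ℝ² → [0,∞) be twice differentiable in its second variable with ∂²L/∂z² > 0, and let K₁ ⊂ ℝ be finite and K₂ ⊂ ℝ be compact. Then there exists λ₀ > 0 such that for all λ ∈ (0, λ₀], all k ≥ 1, all y₁,…,y_k ∈ K₁ and z₁,…,z_k ∈ K₂, setting z = −(∑_i ∂L/∂z(y_i,z_i)) / (∑_i ∂²L/∂z²(y_i,z_i)), one has ∑_{i=1}^k L(y_i, z_i + λz) ≤ ∑_{i=1}^k L(y_i, z_i). -/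
open Finset

lemma abs_sub_le_of_mem_uIcc {z d c : ℝ} (hc : c ∈ Set.uIcc z (z + d)) : |c - z| ≤ |d| := by
  rcases Set.mem_uIcc.mp hc with ⟨h1, h2⟩ | ⟨h1, h2⟩ <;>
    rw [abs_le] <;>
    constructor <;>
    linarith [neg_abs_le d, le_abs_self d, abs_nonneg d]

lemma mvt' (f f' : ℝ → ℝ) (hf : ∀ x, HasDerivAt f (f' x) x) (a b : ℝ) :
    ∃ c ∈ Set.uIcc a b, f b - f a = f' c * (b - a) := by
  rcases lt_trichotomy a b with h | h | h
  · obtain ⟨c, hc, hc'⟩ := exists_hasDerivAt_eq_slope f f' h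
      (fun x _ => ((hf x).continuousAt).continuousWithinAt) (fun x _ => hf x)
    have hne : b - a ≠ 0 := sub_ne_zero.mpr h.ne'
    rw [eq_div_iff hne] at hc'
    refine ⟨c, ?_, hc'.symm⟩
    rw [Set.uIcc_of_le h.le]
    exact Set.Ioo_subset_Icc_self hc
  · exact ⟨a, Set.left_mem_uIcc, by subst h; simp⟩
  · obtain ⟨c, hc, hc'⟩ := exists_hasDerivAt_eq_slope f f' h
      (fun x _ => ((hf x).continuousAt).continuousWithinAt) (fun x _ => hf x)
    have hne : a - b ≠ 0 := sub_ne_zero.mpr h.ne'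
    rw [eq_div_iff hne] at hc'
    refine ⟨c, ?_, by linear_combination hc'⟩
    rw [Set.uIcc_of_ge h.le]
    exact Set.Ioo_subset_Icc_self hc

lemma taylor_ub (f f' f'' : ℝ → ℝ) (h1 : ∀ x, HasDerivAt f (f' x) x)
    (h2 : ∀ x, HasDerivAt f' (f'' x) x) (hpos : ∀ x, 0 < f'' x)
    (z d M : ℝ) (hM : ∀ e ∈ Set.uIcc z (z + d), f'' e ≤ M) :
    f (z + d) ≤ f z + d * f' z + d ^ 2 * M := by
  obtain ⟨c, hc, hceq⟩ := mvt' f f' h1 z (z + d)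
  obtain ⟨e, he, heeq⟩ := mvt' f' f'' h2 z c
  have hsub : Set.uIcc z c ⊆ Set.uIcc z (z + d) := Set.uIcc_subset_uIcc Set.left_mem_uIcc hc
  have habs : |c - z| ≤ |d| := abs_sub_le_of_mem_uIcc hc
  have hMe : f'' e ≤ M := hM e (hsub he)
  have hpe : 0 ≤ f'' e := (hpos e).le
  have hsimp : z + d - z = d := by ring
  rw [hsimp] at hceq
  have hb : d * (f'' e * (c - z)) ≤ d ^ 2 * M := by
    calc d * (f'' e * (c - z)) ≤ |d * (f'' e * (c - z))| := le_abs_self _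
      _ = |d| * (f'' e * |c - z|) := by rw [abs_mul, abs_mul, abs_of_nonneg hpe]
      _ ≤ |d| * (M * |d|) := by
          refine mul_le_mul_of_nonneg_left ?_ (abs_nonneg d)
          exact mul_le_mul hMe habs (abs_nonneg _) (le_trans hpe hMe)
      _ = d ^ 2 * M := by
          rw [show |d| * (M * |d|) = |d| * |d| * M by ring, abs_mul_abs_self, ← pow_two]
  have hkey : f (z + d) = f z + d * f' z + d * (f'' e * (c - z)) := by
    have h3 : f' c = f' z + f'' e * (c - z) := by linarith
    have h4 : f (z + d) = f z + f' c * d := by linarith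
    rw [h4, h3]; ring
  linarith

/-- Uniform one-step-Newton descent lemma: if `L : ℝ² → [0,∞)` is twice differentiable in
its second variable (with derivatives `L'`, `L''`, `L''` positive and continuous in `z`),
`K₁ ⊆ ℝ` is finite and `K₂ ⊆ ℝ` is compact, then there is `λ₀ > 0` such that for every
`λ ∈ (0, λ₀]`, every `k ≥ 1` and every `y₁,…,y_k ∈ K₁`, `z₁,…,z_k ∈ K₂`, the Newton step
`z = −(∑ L'(yᵢ,zᵢ))/(∑ L''(yᵢ,zᵢ))` does not increase the total loss. -/
theorem newton_step_decreases_loss (L L' L'' : ℝ → ℝ → ℝ)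
    (hnonneg : ∀ y z, 0 ≤ L y z)
    (hderiv : ∀ y z, HasDerivAt (L y) (L' y z) z)
    (hderiv2 : ∀ y z, HasDerivAt (L' y) (L'' y z) z)
    (hpos : ∀ y z, 0 < L'' y z)
    (hcont : ∀ y, Continuous (L'' y))
    (K₁ K₂ : Set ℝ) (hK₁ : K₁.Finite) (hK₂ : IsCompact K₂) :
    ∃ lam₀ > (0 : ℝ), ∀ lam ∈ Set.Ioc (0 : ℝ) lam₀, ∀ (k : ℕ), 0 < k →
      ∀ (y z : Fin k → ℝ), (∀ i, y i ∈ K₁) → (∀ i, z i ∈ K₂) →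
        ∑ i, L (y i) (z i +
            lam * (-(∑ j, L' (y j) (z j)) / (∑ j, L'' (y j) (z j))))
          ≤ ∑ i, L (y i) (z i) := by
  classical
  rcases K₁.eq_empty_or_nonempty with h1e | h1ne
  · exact ⟨1, one_pos, fun lam _ k hk y z hy _ => absurd (hy ⟨0, hk⟩) (by simp [h1e])⟩
  rcases K₂.eq_empty_or_nonempty with h2e | h2ne
  · exact ⟨1, one_pos, fun lam _ k hk y z _ hz => absurd (hz ⟨0, hk⟩) (by simp [h2e])⟩
  obtain ⟨y0, hy0⟩ := h1ne
  obtain ⟨x0, hx0⟩ := h2ne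
  have hFne : hK₁.toFinset.Nonempty := by
    rw [Set.Finite.toFinset_nonempty]; exact ⟨y0, hy0⟩
  have hL'cont : ∀ a, Continuous (L' a) :=
    fun a => continuous_iff_continuousAt.mpr fun x => (hderiv2 a x).continuousAt
  -- uniform positive lower bound on L'' over K₁ × K₂
  choose f hfmem hfmin using fun a => hK₂.exists_isMinOn ⟨x0, hx0⟩ (hcont a).continuousOn
  set m : ℝ := hK₁.toFinset.inf' hFne (fun a => L'' a (f a)) with hm_def
  have hm_pos : 0 < m := by
    rw [hm_def, Finset.lt_inf'_iff]
    exact fun a _ => hpos _ _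
  have hm_le : ∀ a ∈ K₁, ∀ x ∈ K₂, m ≤ L'' a x := fun a ha x hx =>
    (Finset.inf'_le _ (hK₁.mem_toFinset.mpr ha)).trans (hfmin a hx)
  -- uniform bound on |L'| over K₁ × K₂
  choose g hgmem hgmax using fun a =>
    hK₂.exists_isMaxOn ⟨x0, hx0⟩ ((hL'cont a).abs).continuousOn
  set M1 : ℝ := hK₁.toFinset.sup' hFne (fun a => |L' a (g a)|) with hM1_def
  have hM1_le : ∀ a ∈ K₁, ∀ x ∈ K₂, |L' a x| ≤ M1 := fun a ha x hx =>
    (hgmax a hx).trans (Finset.le_sup' _ (hK₁.mem_toFinset.mpr ha))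
  have hM1_nonneg : 0 ≤ M1 := (abs_nonneg _).trans (hM1_le y0 hy0 x0 hx0)
  set R : ℝ := M1 / m with hR_def
  have hR_nonneg : 0 ≤ R := div_nonneg hM1_nonneg hm_pos.le
  set K' : Set ℝ := Metric.cthickening R K₂ with hK'_def
  have hK'comp : IsCompact K' := hK₂.cthickening
  have hK'sub : K₂ ⊆ K' := Metric.self_subset_cthickening K₂
  have hK'ne : K'.Nonempty := ⟨x0, hK'sub hx0⟩
  -- uniform upper bound on L'' over K₁ × K'
  choose q hqmem hqmax using fun a => hK'comp.exists_isMaxOn hK'ne (hcont a).continuousOn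
  set M2 : ℝ := hK₁.toFinset.sup' hFne (fun a => L'' a (q a)) with hM2_def
  have hM2_le : ∀ a ∈ K₁, ∀ e ∈ K', L'' a e ≤ M2 := fun a ha e he =>
    (hqmax a he).trans (Finset.le_sup' _ (hK₁.mem_toFinset.mpr ha))
  have hM2_pos : 0 < M2 :=
    lt_of_lt_of_le (hpos y0 (q y0)) (Finset.le_sup' (fun a => L'' a (q a)) (hK₁.mem_toFinset.mpr hy0))
  have hmM2 : m ≤ M2 := (hm_le y0 hy0 x0 hx0).trans (hM2_le y0 hy0 x0 (hK'sub hx0))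
  refine ⟨m / M2, div_pos hm_pos hM2_pos, ?_⟩
  intro lam hlam k hk yv zv hy hz
  have hklt : (0 : ℝ) < (k : ℝ) := by exact_mod_cast hk
  have hne : (Finset.univ : Finset (Fin k)).Nonempty := ⟨⟨0, hk⟩, Finset.mem_univ _⟩
  set S2 : ℝ := ∑ j, L'' (yv j) (zv j) with hS2
  set S1 : ℝ := ∑ j, L' (yv j) (zv j) with hS1
  set d : ℝ := lam * (-S1 / S2) with hd
  have hS2pos : 0 < S2 := Finset.sum_pos (fun i _ => hpos _ _) hne
  have hS2ge : (k : ℝ) * m ≤ S2 := by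
    have h := Finset.sum_le_sum (s := (Finset.univ : Finset (Fin k))) (f := fun _ : Fin k => m)
      (g := fun j => L'' (yv j) (zv j)) (fun i _ => hm_le _ (hy i) _ (hz i))
    simpa [Finset.sum_const, Finset.card_univ, nsmul_eq_mul, hS2] using h
  have hS1le : |S1| ≤ (k : ℝ) * M1 := by
    calc |S1| ≤ ∑ j, |L' (yv j) (zv j)| := by rw [hS1]; exact Finset.abs_sum_le_sum_abs _ _
      _ ≤ ∑ _j : Fin k, M1 := Finset.sum_le_sum fun i _ => hM1_le _ (hy i) _ (hz i)
      _ = (k : ℝ) * M1 := by simp [Finset.sum_const, Finset.card_univ, nsmul_eq_mul]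
  have hlam1 : lam ≤ 1 := hlam.2.trans ((div_le_one hM2_pos).mpr hmM2)
  have hdabs : |d| ≤ R := by
    rw [hd, abs_mul, abs_div, abs_neg, abs_of_pos hS2pos, abs_of_pos hlam.1]
    have h1 : lam * |S1| ≤ (k : ℝ) * M1 := by nlinarith [abs_nonneg S1]
    calc lam * (|S1| / S2) = lam * |S1| / S2 := by ring
      _ ≤ ((k : ℝ) * M1) / ((k : ℝ) * m) :=
          div_le_div₀ (by positivity) h1 (by positivity) hS2ge
      _ = M1 / m := mul_div_mul_left _ _ (ne_of_gt hklt)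
  have per : ∀ i : Fin k,
      L (yv i) (zv i + d) ≤ L (yv i) (zv i) + d * L' (yv i) (zv i) + d ^ 2 * M2 := by
    intro i
    refine taylor_ub _ _ _ (hderiv (yv i)) (hderiv2 (yv i)) (hpos (yv i)) _ _ _ ?_
    intro e he
    refine hM2_le _ (hy i) _ ?_
    refine Metric.mem_cthickening_of_dist_le e (zv i) R K₂ (hz i) ?_
    rw [Real.dist_eq]
    exact (abs_sub_le_of_mem_uIcc he).trans hdabs
  have hlamM2 : lam * M2 ≤ m := (le_div_iff₀ hM2_pos).mp hlam.2
  have h1 : (k : ℝ) * lam * M2 ≤ S2 := by nlinarith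
  have key : d * S1 + (k : ℝ) * d ^ 2 * M2 ≤ 0 := by
    have expand : d * S1 + (k : ℝ) * d ^ 2 * M2
        = lam * (S1 / S2) ^ 2 * ((k : ℝ) * lam * M2 - S2) := by
      rw [hd]; field_simp; ring
    rw [expand]
    exact mul_nonpos_of_nonneg_of_nonpos (mul_nonneg hlam.1.le (sq_nonneg _)) (by linarith)
  calc ∑ i, L (yv i) (zv i + d)
      ≤ ∑ i, (L (yv i) (zv i) + d * L' (yv i) (zv i) + d ^ 2 * M2) :=
        Finset.sum_le_sum fun i _ => per i
    _ = (∑ i, L (yv i) (zv i)) + d * S1 + (k : ℝ) * d ^ 2 * M2 := by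
        rw [Finset.sum_add_distrib, Finset.sum_add_distrib, ← Finset.mul_sum, ← hS1,
          Finset.sum_const, Finset.card_univ, Fintype.card_fin, nsmul_eq_mul]
        push_cast; ring
    _ ≤ ∑ i, L (yv i) (zv i) := by linarith
end

section
/- Let L: ℝ² → [0,∞) be such that z ↦ L(y,z) is convex, differentiable, nonnegative, with inf_z L(y,z) = 0 for all y. Then for every finite set of values y₁,…,y_n and every ℓ₀ > 0, there exists δ > 0 such that for any z₁,…,z_n ∈ ℝ with ∑_{i=1}^n L(yᵢ, zᵢ) ≥ ℓ₀, one has max_{1≤i≤n} |∂L/∂z(yᵢ, zᵢ)| ≥ δ. -/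
open Finset

/-- Key single-variable lemma: a nonnegative convex differentiable function with infimum 0
has derivative bounded away from 0 on the set where the function is at least `ε`. -/
lemma key_lemma (f f' : ℝ → ℝ) (hconv : ConvexOn ℝ Set.univ f)
    (hderiv : ∀ z, HasDerivAt f (f' z) z) (hinf : ⨅ z : ℝ, f z = 0)
    (ε : ℝ) (hε : 0 < ε) : ∃ δ > (0 : ℝ), ∀ z, ε ≤ f z → δ ≤ |f' z| := by
  obtain ⟨a, ha⟩ : ∃ a, f a < ε := exists_lt_of_ciInf_lt (by rw [hinf]; exact hε)
  set gap : ℝ := ε - f a with hgap_def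
  have hgap : 0 < gap := by simp [hgap_def]; linarith
  -- right side
  have right : ∃ δ > (0:ℝ), ∀ z, a < z → ε ≤ f z → δ ≤ f' z := by
    by_cases h : ∃ w, a < w ∧ ε ≤ f w
    · obtain ⟨w, hw, hfw⟩ := h
      refine ⟨gap / (w - a), div_pos hgap (by linarith), fun z hz hfz => ?_⟩
      have hslope : slope f a z ≤ f' z :=
        hconv.slope_le_of_hasDerivAt (Set.mem_univ a) (Set.mem_univ z) hz (hderiv z)
      rw [slope_def_field] at hslope
      rcases le_or_gt z w with hzw | hwz
      · have h1 : gap / (w - a) ≤ gap / (z - a) :=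
          div_le_div_of_nonneg_left hgap.le (by linarith) (by linarith)
        have h2 : gap / (z - a) ≤ (f z - f a) / (z - a) :=
          (div_le_div_iff_of_pos_right (by linarith)).mpr (by simp [hgap_def]; linarith)
        linarith
      · have h1 : gap / (w - a) ≤ (f w - f a) / (w - a) :=
          (div_le_div_iff_of_pos_right (by linarith)).mpr (by simp [hgap_def]; linarith)
        have h2 : (f w - f a) / (w - a) ≤ (f z - f a) / (z - a) :=
          hconv.secant_mono (Set.mem_univ a) (Set.mem_univ w) (Set.mem_univ z)
            hw.ne' hz.ne' hwz.le
        linarith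
    · push_neg at h
      exact ⟨1, one_pos, fun z hz hfz => absurd hfz (not_le.mpr (h z hz))⟩
  -- left side
  have left : ∃ δ > (0:ℝ), ∀ z, z < a → ε ≤ f z → f' z ≤ -δ := by
    by_cases h : ∃ w, w < a ∧ ε ≤ f w
    · obtain ⟨w, hw, hfw⟩ := h
      refine ⟨gap / (a - w), div_pos hgap (by linarith), fun z hz hfz => ?_⟩
      have hslope : f' z ≤ slope f z a :=
        hconv.le_slope_of_hasDerivAt (Set.mem_univ z) (Set.mem_univ a) hz (hderiv z)
      rw [slope_def_field] at hslope
      rcases le_or_gt w z with hwz | hzw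
      · -- w ≤ z < a : (f a - f z)/(a - z) ≤ -gap/(a-z) ≤ -gap/(a-w)
        have h2 : (f a - f z) / (a - z) ≤ -gap / (a - z) :=
          (div_le_div_iff_of_pos_right (by linarith)).mpr (by simp [hgap_def]; linarith)
        have h1 : -gap / (a - z) ≤ -(gap / (a - w)) := by
          rw [neg_div]
          have : gap / (a - w) ≤ gap / (a - z) :=
            div_le_div_of_nonneg_left hgap.le (by linarith) (by linarith)
          linarith
        linarith
      · -- z < w < a : slope f z a = (f z - f a)/(z - a) ≤ (f w - f a)/(w - a)
        have h2 : (f z - f a) / (z - a) ≤ (f w - f a) / (w - a) :=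
          hconv.secant_mono (Set.mem_univ a) (Set.mem_univ z) (Set.mem_univ w)
            hz.ne hw.ne hzw.le
        have h3 : (f w - f a) / (w - a) ≤ -(gap / (a - w)) := by
          rw [div_le_iff_of_neg (by linarith : w - a < 0)]
          have hwa : 0 < a - w := by linarith
          rw [neg_mul, ← neg_sub a w, mul_neg, neg_neg, div_mul_cancel₀ _ hwa.ne']
          simp [hgap_def]; linarith
        have h4 : (f a - f z) / (a - z) = (f z - f a) / (z - a) := by
          rw [← neg_sub (f z) (f a), ← neg_sub z a, neg_div_neg_eq]
        linarith
    · push_neg at h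
      exact ⟨1, one_pos, fun z hz hfz => absurd hfz (not_le.mpr (h z hz))⟩
  obtain ⟨δ₁, hδ₁, hR⟩ := right
  obtain ⟨δ₂, hδ₂, hL⟩ := left
  refine ⟨min δ₁ δ₂, lt_min hδ₁ hδ₂, fun z hfz => ?_⟩
  rcases lt_trichotomy z a with hza | rfl | haz
  · have := hL z hza hfz
    rw [abs_of_nonpos (by linarith)]
    calc min δ₁ δ₂ ≤ δ₂ := min_le_right _ _
      _ ≤ -f' z := by linarith
  · linarith
  · have := hR z haz hfz
    calc min δ₁ δ₂ ≤ δ₁ := min_le_left _ _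
      _ ≤ |f' z| := le_trans this (le_abs_self _)

/-- If `z ↦ L(y,z)` is convex, nonnegative, differentiable with `inf_z L(y,z) = 0`, then
for any values `y₁,…,y_n` and any `ℓ₀ > 0` there is `δ > 0` such that whenever the total
loss `∑ᵢ L(yᵢ,zᵢ)` is at least `ℓ₀`, some residual satisfies `|∂L/∂z(yᵢ,zᵢ)| ≥ δ`. -/
theorem loss_large_implies_gradient_bounded_below
    (L L' : ℝ → ℝ → ℝ)
    (hnonneg : ∀ y z, 0 ≤ L y z)
    (hconv : ∀ y, ConvexOn ℝ Set.univ (L y))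
    (hderiv : ∀ y z, HasDerivAt (L y) (L' y z) z)
    (hinf : ∀ y, ⨅ z : ℝ, L y z = 0)
    (n : ℕ) (y : Fin n → ℝ) (l₀ : ℝ) (hl₀ : 0 < l₀) :
    ∃ δ > (0 : ℝ), ∀ z : Fin n → ℝ,
      l₀ ≤ ∑ i, L (y i) (z i) → ∃ i, δ ≤ |L' (y i) (z i)| := by
  rcases Nat.eq_zero_or_pos n with hn | hn
  · subst hn
    exact ⟨1, one_pos, fun z hz => by simp at hz; linarith⟩
  have hne : (Finset.univ : Finset (Fin n)).Nonempty := by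
    simp [Finset.univ_nonempty_iff]
    exact Fin.pos_iff_nonempty.mp hn
  have hεpos : 0 < l₀ / n := div_pos hl₀ (by exact_mod_cast hn)
  choose δf hδf hkey using fun i : Fin n =>
    key_lemma (L (y i)) (L' (y i)) (hconv (y i)) (hderiv (y i)) (hinf (y i)) (l₀ / n) hεpos
  refine ⟨Finset.univ.inf' hne δf, ?_, fun z hz => ?_⟩
  · exact (Finset.lt_inf'_iff hne).mpr fun i _ => hδf i
  · have : ∃ i, l₀ / n ≤ L (y i) (z i) := by
      by_contra h
      push_neg at h
      have : ∑ i, L (y i) (z i) < ∑ _i : Fin n, l₀ / n :=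
        Finset.sum_lt_sum_of_nonempty hne fun i _ => h i
      rw [Finset.sum_const, Finset.card_univ, Fintype.card_fin, nsmul_eq_mul,
        mul_div_cancel₀ _ (by exact_mod_cast hn.ne' : (n:ℝ) ≠ 0)] at this
      linarith
    obtain ⟨i, hi⟩ := this
    exact ⟨i, le_trans (Finset.inf'_le _ (Finset.mem_univ i)) (hkey i _ hi)⟩
end
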